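/- arXiv:2006.09280 — 12 statements merged into one kernel-verified Lean document; each statement's English description precedes it below -/
import Mathlib

section
/- Let A be a Poisson algebra that is also an integral domain, and let f ∈ A be a Poisson normal element (i.e., {f, A} ⊆ fA). Then there exists a Poisson derivation π_f of A such that {f, a} = π_f(a)·f for all a ∈ A; that is, π_f is a derivation of the commutative product and satisfies π_f({a,b}) = {π_f(a), b} + {a, π_f(b)} for all a, b ∈ A. -/
/-- A Poisson bracket on a commutative `k`-algebra `A`: a `k`-bilinear bracket making `A`
a Lie algebra and satisfying the Leibniz rule. -/
structure PoissonBracket (k : Type*) (A : Type*) [CommRing k] [CommRing A] [Algebra k A] where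
  br : A → A → A
  add_left : ∀ a b c : A, br (a + b) c = br a c + br b c
  smul_left : ∀ (r : k) (a b : A), br (r • a) b = r • br a b
  antisymm : ∀ a b : A, br a b = - br b a
  leibniz : ∀ a b c : A, br a (b * c) = b * br a c + br a b * c
  jacobi : ∀ a b c : A, br a (br b c) = br (br a b) c + br b (br a c)

section aux

variable {k A : Type*} [CommRing k] [CommRing A] [Algebra k A] (P : PoissonBracket k A)

lemma PoissonBracket.zero_left (b : A) : P.br 0 b = 0 := by
  have h := P.add_left 0 0 b
  rw [add_zero] at h
  linear_combination -h

lemma PoissonBracket.zero_right (a : A) : P.br a 0 = 0 := by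
  rw [P.antisymm, P.zero_left, neg_zero]

lemma PoissonBracket.add_right (a b c : A) : P.br a (b + c) = P.br a b + P.br a c := by
  rw [P.antisymm, P.add_left, P.antisymm b a, P.antisymm c a]; ring

lemma PoissonBracket.smul_right (r : k) (a b : A) : P.br a (r • b) = r • P.br a b := by
  rw [P.antisymm, P.smul_left, P.antisymm b a, smul_neg, neg_neg]

end aux

/-- If `A` is a Poisson algebra that is an integral domain and `f` is Poisson
normal (`{f, A} ⊆ fA`), then there is a Poisson derivation `π` with `{f, a} = π a * f`. -/
theorem poisson_normal_gives_poisson_derivation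
    {k A : Type*} [Field k] [CharZero k] [CommRing A] [IsDomain A] [Algebra k A]
    (P : PoissonBracket k A) (f : A)
    (hf : ∀ a : A, ∃ c : A, P.br f a = f * c) :
    ∃ π : A → A,
      (∀ a : A, P.br f a = π a * f) ∧
      (∀ a b : A, π (a + b) = π a + π b) ∧
      (∀ (r : k) (a : A), π (r • a) = r • π a) ∧
      (∀ a b : A, π (a * b) = π a * b + a * π b) ∧
      (∀ a b : A, π (P.br a b) = P.br (π a) b + P.br a (π b)) := by
  by_cases hf0 : f = 0
  · subst hf0
    exact ⟨fun _ => 0, fun a => by rw [P.zero_left, zero_mul],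
      fun a b => by ring, fun r a => by simp,
      fun a b => by ring,
      fun a b => by rw [P.zero_left, P.zero_right, add_zero]⟩
  · refine ⟨fun a => Classical.choose (hf a), ?_, ?_, ?_, ?_, ?_⟩
    all_goals
      have key : ∀ a : A, P.br f a = f * Classical.choose (hf a) :=
        fun a => Classical.choose_spec (hf a)
    · intro a; rw [key a, mul_comm]
    · intro a b
      apply mul_left_cancel₀ hf0
      rw [← key, P.add_right, key a, key b, mul_add]
    · intro r a
      apply mul_left_cancel₀ hf0
      rw [← key, P.smul_right, key a, mul_smul_comm]
    · intro a b
      apply mul_left_cancel₀ hf0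
      rw [← key, P.leibniz, key a, key b]; ring
    · intro a b
      apply mul_left_cancel₀ hf0
      set ca := Classical.choose (hf a) with hca
      set cb := Classical.choose (hf b) with hcb
      have ka := key a; rw [← hca] at ka
      have kb := key b; rw [← hcb] at kb
      have h1 : P.br (f * ca) b = f * P.br ca b + f * cb * ca := by
        linear_combination P.antisymm (f * ca) b - P.leibniz b f ca - f * P.antisymm b ca -
          ca * P.antisymm b f + ca * kb
      have h2 : P.br a (f * cb) = f * P.br a cb - f * ca * cb := by
        linear_combination P.leibniz a f cb + cb * P.antisymm a f - cb * ka
      have h1' : P.br (P.br f a) b = P.br (f * ca) b := by rw [ka]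
      have h2' : P.br a (P.br f b) = P.br a (f * cb) := by rw [kb]
      rw [← key, P.jacobi, h1', h2', h1, h2]
      ring
end

section
/- Let A = k[x₁,...,xₙ] be a polynomial Poisson algebra and g a graded Poisson automorphism of A of finite order. Suppose there is a basis {y₁,...,yₙ} of the degree-one part A₁ such that g(y₁) = ζ·y₁ for a root of unity ζ ≠ 1 and g(yᵢ) = yᵢ for all i ≥ 2. Then y₁ is a Poisson normal element of A, i.e., {y₁, A} ⊆ y₁·A. -/
open MvPolynomial

/-- If `g` is a finite-order graded Poisson automorphism of `A = k[x₁,...,xₙ]`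
with an eigenbasis `y` of the degree-one part where `g y₀ = ζ y₀` (`ζ ≠ 1` a root of unity)
and `g yᵢ = yᵢ` for `i ≥ 1`, then `y₀` is Poisson normal: `{y₀, A} ⊆ y₀ A`. -/
theorem poisson_reflection_eigenvector_is_normal
    {k : Type*} [Field k] [IsAlgClosed k] [CharZero k] (n : ℕ)
    (P : PoissonBracket k (MvPolynomial (Fin (n + 1)) k))
    (g : MvPolynomial (Fin (n + 1)) k ≃ₐ[k] MvPolynomial (Fin (n + 1)) k)
    (hgP : ∀ a b, g (P.br a b) = P.br (g a) (g b))
    (hgraded : ∀ (u : MvPolynomial (Fin (n + 1)) k) (d : ℕ),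
      u.IsHomogeneous d → (g u).IsHomogeneous d)
    (hord : IsOfFinOrder g)
    (y : Fin (n + 1) → MvPolynomial (Fin (n + 1)) k)
    (hyhom : ∀ i, (y i).IsHomogeneous 1)
    (hyind : AlgebraicIndependent k y)
    (hygen : Algebra.adjoin k (Set.range y) = ⊤)
    (ζ : k) (hζ : ζ ≠ 1) (hζroot : ∃ m : ℕ, 0 < m ∧ ζ ^ m = 1)
    (hgy0 : g (y 0) = ζ • y 0)
    (hgyi : ∀ i, i ≠ 0 → g (y i) = y i) :
    ∀ a : MvPolynomial (Fin (n + 1)) k, ∃ c, P.br (y 0) a = y 0 * c := by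
  classical
  -- the equivalence sending X i to y i
  let e : MvPolynomial (Fin (n+1)) k ≃ₐ[k] MvPolynomial (Fin (n+1)) k :=
    hyind.aevalEquiv.trans ((Subalgebra.equivOfEq _ _ hygen).trans Subalgebra.topEquiv)
  have he : ∀ p, e p = aeval y p := fun p => hyind.algebraMap_aevalEquiv p
  have heX : ∀ i, e (X i) = y i := fun i => by rw [he, aeval_X]
  have heX' : ∀ i, e.symm (y i) = X i := fun i => by rw [← heX i, e.symm_apply_apply]
  -- the pulled-back automorphism
  let G : MvPolynomial (Fin (n+1)) k ≃ₐ[k] MvPolynomial (Fin (n+1)) k :=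
    e.trans (g.trans e.symm)
  have hGX0 : G (X 0) = C ζ * X 0 := by
    show e.symm (g (e (X 0))) = C ζ * X 0
    rw [heX, hgy0, smul_eq_C_mul, map_mul, heX']
    congr 1
    rw [show (C ζ : MvPolynomial (Fin (n+1)) k) = algebraMap k _ ζ from rfl,
      AlgEquiv.commutes]
  have hGXi : ∀ i : Fin (n+1), i ≠ 0 → G (X i) = X i := by
    intro i hi
    show e.symm (g (e (X i))) = X i
    rw [heX, hgyi i hi, heX']
  -- the "set X 0 to zero" ring hom
  let ε : MvPolynomial (Fin (n+1)) k →+* MvPolynomial (Fin n) k :=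
    (Polynomial.evalRingHom 0).comp (finSuccEquiv k n).toRingEquiv.toRingHom
  have hεC : ∀ r : k, ε (C r) = C r := by
    intro r
    show Polynomial.eval 0 (finSuccEquiv k n (C r)) = C r
    simp [finSuccEquiv_apply]
  have hεX0 : ε (X 0) = 0 := by
    show Polynomial.eval 0 (finSuccEquiv k n (X 0)) = 0
    rw [finSuccEquiv_X_zero]; simp
  have hεXs : ∀ j : Fin n, ε (X j.succ) = X j := by
    intro j
    show Polynomial.eval 0 (finSuccEquiv k n (X j.succ)) = X j
    rw [finSuccEquiv_X_succ]; simp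
  -- key divisibility lemma
  have key : ∀ f, g f = ζ • f → y 0 ∣ f := by
    intro f hf
    set p := e.symm f with hp
    have hGp : G p = C ζ * p := by
      show e.symm (g (e (e.symm f))) = C ζ * p
      rw [e.apply_symm_apply, hf, smul_eq_C_mul, map_mul, hp]
      congr 1
      rw [show (C ζ : MvPolynomial (Fin (n+1)) k) = algebraMap k _ ζ from rfl,
        AlgEquiv.commutes]
    have hεG : ε.comp (G : MvPolynomial (Fin (n+1)) k →+* MvPolynomial (Fin (n+1)) k) = ε := by
      apply MvPolynomial.ringHom_ext
      · intro r
        simp only [RingHom.comp_apply, RingHom.coe_coe]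
        rw [show (C r : MvPolynomial (Fin (n+1)) k) = algebraMap k _ r from rfl,
          AlgEquiv.commutes]
      · intro i
        simp only [RingHom.comp_apply, RingHom.coe_coe]
        refine Fin.cases ?_ ?_ i
        · rw [hGX0, map_mul, hεX0, mul_zero]
        · intro j
          rw [hGXi j.succ (Fin.succ_ne_zero j)]
    have hεp : ε p = 0 := by
      have h1 : ε (G p) = ε p := RingHom.congr_fun hεG p
      rw [hGp, map_mul, hεC] at h1
      have h2 : (C ζ - 1) * ε p = 0 := by rw [sub_mul, one_mul, h1, sub_self]
      rcases mul_eq_zero.mp h2 with h | h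
      · exfalso
        apply hζ
        have : (C ζ : MvPolynomial (Fin n) k) = C 1 := by
          rw [map_one]; linear_combination h
        exact MvPolynomial.C_injective _ _ this
      · exact h
    have hXdvd : (X 0 : MvPolynomial (Fin (n+1)) k) ∣ p := by
      have hPX : (Polynomial.X : Polynomial (MvPolynomial (Fin n) k)) ∣ finSuccEquiv k n p := by
        rw [Polynomial.X_dvd_iff, Polynomial.coeff_zero_eq_eval_zero]
        exact hεp
      obtain ⟨q, hq⟩ := hPX
      refine ⟨(finSuccEquiv k n).symm q, ?_⟩
      apply (finSuccEquiv k n).injective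
      rw [hq, map_mul, finSuccEquiv_X_zero, AlgEquiv.apply_symm_apply]
    obtain ⟨q, hq⟩ := hXdvd
    refine ⟨e q, ?_⟩
    have : f = e p := by rw [hp, e.apply_symm_apply]
    rw [this, hq, map_mul, heX]
  -- bracket with y 0 is additive / k-linear in second slot
  have Dadd : ∀ a b, P.br (y 0) (a + b) = P.br (y 0) a + P.br (y 0) b := by
    intro a b
    rw [P.antisymm, P.add_left, neg_add, ← P.antisymm, ← P.antisymm]
  have Dsmul : ∀ (r : k) a, P.br (y 0) (r • a) = r • P.br (y 0) a := by
    intro r a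
    rw [P.antisymm, P.smul_left, ← smul_neg, ← P.antisymm]
  have Done : P.br (y 0) 1 = 0 := by
    have h := P.leibniz (y 0) 1 1
    rw [mul_one, one_mul, mul_one] at h
    exact (left_eq_add.mp h)
  -- the subalgebra of elements a with {y0, a} ∈ (y0)
  let S : Subalgebra k (MvPolynomial (Fin (n+1)) k) :=
    { carrier := {a | P.br (y 0) a ∈ Ideal.span {y 0}}
      mul_mem' := fun {a b} ha hb => by
        simp only [Set.mem_setOf_eq] at *
        rw [P.leibniz]
        exact add_mem (Ideal.mul_mem_left _ _ hb) (Ideal.mul_mem_right _ _ ha)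
      one_mem' := by
        simp only [Set.mem_setOf_eq, Done]
        exact Ideal.zero_mem _
      add_mem' := fun {a b} ha hb => by
        simp only [Set.mem_setOf_eq] at *
        rw [Dadd]
        exact add_mem ha hb
      zero_mem' := by
        simp only [Set.mem_setOf_eq]
        have : P.br (y 0) (0 : MvPolynomial (Fin (n+1)) k) = 0 := by
          have := Dsmul 0 0
          simpa using this
        rw [this]; exact Ideal.zero_mem _
      algebraMap_mem' := fun r => by
        simp only [Set.mem_setOf_eq]
        rw [Algebra.algebraMap_eq_smul_one, Dsmul, Done, smul_zero]
        exact Ideal.zero_mem _ }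
  have hyS : Set.range y ⊆ S := by
    rintro _ ⟨i, rfl⟩
    show P.br (y 0) (y i) ∈ Ideal.span {y 0}
    by_cases hi : i = 0
    · subst hi
      have h := P.antisymm (y 0) (y 0)
      have h2 : P.br (y 0) (y 0) + P.br (y 0) (y 0) = 0 := add_eq_zero_iff_eq_neg.mpr h
      have h3 : (2 : MvPolynomial (Fin (n+1)) k) * P.br (y 0) (y 0) = 0 := by
        rw [two_mul]; exact h2
      rcases mul_eq_zero.mp h3 with h4 | h4
      · exact absurd h4 two_ne_zero
      · rw [h4]; exact Ideal.zero_mem _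
    · have hgf : g (P.br (y 0) (y i)) = ζ • P.br (y 0) (y i) := by
        rw [hgP, hgy0, hgyi i hi, P.smul_left]
      exact Ideal.mem_span_singleton.mpr (key _ hgf)
  have hStop : ∀ a : MvPolynomial (Fin (n+1)) k, a ∈ S := by
    intro a
    have : Algebra.adjoin k (Set.range y) ≤ S := Algebra.adjoin_le hyS
    rw [hygen] at this
    exact this trivial
  intro a
  have := hStop a
  obtain ⟨c, hc⟩ := Ideal.mem_span_singleton.mp this
  exact ⟨c, hc⟩
end

section
/- Let A = k[x, y] be the polynomial Poisson algebra with bracket determined by {x, y} = x². Then every graded Poisson automorphism g of A satisfies g(x) = μx and g(y) = νx + μy for some μ ∈ k^×, ν ∈ k; in particular, g has a single eigenvalue μ on A₁ and A has no Poisson reflections. -/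
open MvPolynomial

lemma deg1_form {k : Type*} [Field k] (p : MvPolynomial (Fin 2) k)
    (hp : p.IsHomogeneous 1) : ∃ a b : k, p = a • X 0 + b • X 1 := by
  refine ⟨coeff (Finsupp.single 0 1) p, coeff (Finsupp.single 1 1) p, ?_⟩
  ext m
  simp only [coeff_add, coeff_smul, coeff_X', smul_eq_mul, mul_ite, mul_one, mul_zero]
  by_cases h0 : (Finsupp.single 0 1 : Fin 2 →₀ ℕ) = m
  · subst h0
    have : (Finsupp.single 1 1 : Fin 2 →₀ ℕ) ≠ Finsupp.single 0 1 := by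
      intro h; have := DFunLike.congr_fun h 0; simp at this
    simp [this]
  · by_cases h1 : (Finsupp.single 1 1 : Fin 2 →₀ ℕ) = m
    · subst h1; simp [h0]
    · simp only [if_neg h0, if_neg h1, add_zero]
      by_contra hc
      have hd : m.degree = 1 := by
        by_contra hne
        exact hc (hp.coeff_eq_zero hne)
      have hsum : m 0 + m 1 = 1 := by
        have : m.degree = ∑ i : Fin 2, m i := by
          rw [Finsupp.degree_apply, Finset.sum_subset (Finset.subset_univ m.support)
            (by intro i _ h; simpa using h)]
        rw [this, Fin.sum_univ_two] at hd
        exact hd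
      have : (m 0 = 1 ∧ m 1 = 0) ∨ (m 0 = 0 ∧ m 1 = 1) := by omega
      rcases this with ⟨ha, hb⟩ | ⟨ha, hb⟩
      · exact h0 (by ext i; fin_cases i <;> simp [ha, hb])
      · exact h1 (by ext i; fin_cases i <;> simp [ha, hb])

lemma coords_eq {k : Type*} [Field k] {a b a' b' : k}
    (h : a • (X 0 : MvPolynomial (Fin 2) k) + b • X 1 = a' • X 0 + b' • X 1) :
    a = a' ∧ b = b' := by
  constructor
  · have := congrArg (eval ![1, 0]) h
    simpa [smul_eq_C_mul] using this
  · have := congrArg (eval ![0, 1]) h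
    simpa [smul_eq_C_mul] using this


/-- For `A = k[x,y]` with `{x,y} = x²`, every graded Poisson automorphism has
the form `g(x) = μx`, `g(y) = νx + μy`; in particular `A` has no Poisson reflections. -/
theorem no_poisson_reflections_x_squared_bracket
    {k : Type*} [Field k] [IsAlgClosed k] [CharZero k]
    (P : PoissonBracket k (MvPolynomial (Fin 2) k))
    (hbr : P.br (X 0) (X 1) = (X 0) ^ 2)
    (g : MvPolynomial (Fin 2) k ≃ₐ[k] MvPolynomial (Fin 2) k)
    (hgP : ∀ a b, g (P.br a b) = P.br (g a) (g b))
    (hgraded : ∀ (u : MvPolynomial (Fin 2) k) (d : ℕ),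
      u.IsHomogeneous d → (g u).IsHomogeneous d) :
    (∃ (μ : k) (ν : k), μ ≠ 0 ∧ g (X 0) = μ • X 0 ∧ g (X 1) = ν • X 0 + μ • X 1) ∧
    ¬∃ (ζ : k) (u v : MvPolynomial (Fin 2) k),
        (∃ m : ℕ, 0 < m ∧ ζ ^ m = 1) ∧ ζ ≠ 1 ∧
        u.IsHomogeneous 1 ∧ v.IsHomogeneous 1 ∧
        LinearIndependent k ![u, v] ∧ g u = ζ • u ∧ g v = v := by
  -- bilinearity helpers
  have add_right : ∀ a b c : MvPolynomial (Fin 2) k, P.br a (b + c) = P.br a b + P.br a c := by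
    intro a b c
    rw [P.antisymm a (b + c), P.add_left, P.antisymm a b, P.antisymm a c]
    abel
  have smul_right : ∀ (r : k) (a b : MvPolynomial (Fin 2) k), P.br a (r • b) = r • P.br a b := by
    intro r a b
    rw [P.antisymm, P.smul_left, ← smul_neg, ← P.antisymm]
  have br_self : ∀ a : MvPolynomial (Fin 2) k, P.br a a = 0 := by
    intro a
    have h := P.antisymm a a
    have h2 : (2 : MvPolynomial (Fin 2) k) * P.br a a = 0 := by linear_combination h
    rcases mul_eq_zero.mp h2 with h | h
    · exact absurd h two_ne_zero
    · exact h
  -- decompositions of g X0, g X1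
  obtain ⟨a, b, hgx⟩ := deg1_form (g (X 0)) (hgraded _ 1 (isHomogeneous_X k 0))
  obtain ⟨c, d, hgy⟩ := deg1_form (g (X 1)) (hgraded _ 1 (isHomogeneous_X k 1))
  -- bracket of the images
  have key : P.br (a • X 0 + b • X 1) (c • X 0 + d • X 1)
      = (a * d - b * c) • (X 0 : MvPolynomial (Fin 2) k) ^ 2 := by
    have hyx : P.br (X 1) (X 0) = -((X 0 : MvPolynomial (Fin 2) k) ^ 2) := by
      rw [P.antisymm, hbr]
    rw [P.add_left, P.smul_left, P.smul_left, add_right, add_right,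
      smul_right, smul_right, smul_right, smul_right, br_self, br_self, hbr, hyx]
    rw [smul_eq_C_mul, smul_eq_C_mul, smul_eq_C_mul, smul_eq_C_mul, smul_eq_C_mul,
      smul_eq_C_mul, smul_eq_C_mul]
    simp only [map_sub, map_mul]
    ring
  have main : (a • (X 0 : MvPolynomial (Fin 2) k) + b • X 1) ^ 2
      = (a * d - b * c) • (X 0 : MvPolynomial (Fin 2) k) ^ 2 := by
    have h := hgP (X 0) (X 1)
    rw [hbr, map_pow, hgx, hgy, key] at h
    exact h
  have hb : b = 0 := by
    have h := congrArg (eval ![0, 1]) main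
    simp [smul_eq_C_mul] at h
    exact h
  have ha : a ≠ 0 := by
    intro h0
    have hzero : g (X 0) = 0 := by rw [hgx, hb, h0]; simp
    have := g.injective (by rw [hzero, map_zero] : g (X 0) = g 0)
    exact X_ne_zero (R := k) (σ := Fin 2) 0 this
  have hd : d = a := by
    have h := congrArg (eval ![1, 0]) main
    simp [smul_eq_C_mul, hb] at h
    -- h : a ^ 2 = a * d or similar
    exact mul_left_cancel₀ ha (show a * d = a * a by linear_combination -h)
  constructor
  · exact ⟨a, c, ha, by rw [hgx, hb]; simp, by rw [hgy, hd]⟩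
  · rintro ⟨ζ, u, v, -, hz1, hu1, hv1, hli, hgu, hgv⟩
    obtain ⟨r, s, hu⟩ := deg1_form u hu1
    obtain ⟨p, q, hv⟩ := deg1_form v hv1
    have hune : u ≠ 0 := hli.ne_zero 0
    have hvne : v ≠ 0 := hli.ne_zero 1
    -- compute g u and g v
    have hgu' : (r * a + s * c) • (X 0 : MvPolynomial (Fin 2) k) + (s * a) • X 1
        = (ζ * r) • X 0 + (ζ * s) • X 1 := by
      have h := hgu
      rw [hu, map_add, map_smul, map_smul, hgx, hgy, hb, hd] at h
      simp only [smul_eq_C_mul, map_mul, map_add, map_zero] at h ⊢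
      linear_combination h
    have hgv' : (p * a + q * c) • (X 0 : MvPolynomial (Fin 2) k) + (q * a) • X 1
        = p • X 0 + q • X 1 := by
      have h := hgv
      nth_rewrite 1 [hv] at h
      rw [map_add, map_smul, map_smul, hgx, hgy, hb, hd] at h
      rw [hv] at h
      simp only [smul_eq_C_mul, map_mul, map_add, map_zero] at h ⊢
      linear_combination h
    obtain ⟨hu0, hu1'⟩ := coords_eq hgu'
    obtain ⟨hv0, hv1'⟩ := coords_eq hgv'
    have ha1 : a = 1 := by
      by_cases hq : q = 0
      · have hp : p ≠ 0 := by
          intro hp0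
          apply hvne
          rw [hv, hp0, hq]; simp
        have : p * a = p := by simpa [hq] using hv0
        field_simp at this
        exact this
      · have : a = 1 := by
          have := hv1'
          field_simp at this
          tauto
        exact this
    have hs : s = 0 := by
      have : s * 1 = ζ * s := by rw [← ha1]; exact hu1'
      rcases mul_eq_zero.mp (show (1 - ζ) * s = 0 by linear_combination this) with h | h
      · exact absurd (by linear_combination -h) hz1
      · exact h
    have hr : r = 0 := by
      have : r * 1 + 0 * c = ζ * r := by rw [← ha1, ← hs]; exact hu0
      rcases mul_eq_zero.mp (show (1 - ζ) * r = 0 by linear_combination this) with h | h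
      · exact absurd (by linear_combination -h) hz1
      · exact h
    exact hune (by rw [hu, hs, hr]; simp)
end

section
/- Let A = k[x, y] with Poisson bracket {x, y} = p·xy for some p ∈ k^×. For positive integers m, n, consider the Poisson subalgebra B = k[x^m, y^n] with induced bracket {x^m, y^n} = (p·m·n)·x^m·y^n. Then B is isomorphic to A as Poisson algebras if and only if m = n = 1. -/
open MvPolynomial

section Aux

variable {k : Type*} [CommRing k]

/-- The derivation `b ↦ P.br a b` associated to a Poisson bracket. -/
def PoissonBracket.toDer {A : Type*} [CommRing A] [Algebra k A]
    (P : PoissonBracket k A) (a : A) : Derivation k A A where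
  toFun := fun b => P.br a b
  map_add' := fun b c => by
    show P.br a (b + c) = P.br a b + P.br a c
    rw [P.antisymm a (b + c), P.add_left, P.antisymm b a, P.antisymm c a]
    ring
  map_smul' := fun r b => by
    show P.br a (r • b) = r • P.br a b
    rw [P.antisymm a (r • b), P.smul_left, P.antisymm b a]
    simp
  map_one_eq_zero' := by
    have h := P.leibniz a 1 1
    rw [mul_one, one_mul, mul_one] at h
    have : P.br a 1 + P.br a 1 = P.br a 1 + 0 := by rw [add_zero, ← h]
    exact (add_left_cancel this)
  leibniz' := fun b c => by
    have h := P.leibniz a b c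
    show P.br a (b * c) = b • P.br a c + c • P.br a b
    simp only [smul_eq_mul]
    rw [h]; ring

@[simp] lemma PoissonBracket.toDer_apply {A : Type*} [CommRing A] [Algebra k A]
    (P : PoissonBracket k A) (a b : A) : P.toDer a b = P.br a b := rfl

/-- Conjugation of a derivation by an algebra automorphism. -/
def conjDer {A : Type*} [CommRing A] [Algebra k A] (e : A ≃ₐ[k] A)
    (D : Derivation k A A) : Derivation k A A where
  toLinearMap := e.toLinearMap ∘ₗ (D : A →ₗ[k] A) ∘ₗ e.symm.toLinearMap
  map_one_eq_zero' := by
    simp [Derivation.map_one_eq_zero]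
  leibniz' := fun a b => by
    simp only [LinearMap.coe_comp, Function.comp_apply, AlgEquiv.toLinearMap_apply,
      Derivation.coeFn_coe, map_mul, Derivation.leibniz, smul_eq_mul, map_add]
    simp [smul_eq_mul]

@[simp] lemma conjDer_apply {A : Type*} [CommRing A] [Algebra k A] (e : A ≃ₐ[k] A)
    (D : Derivation k A A) (a : A) : conjDer e D a = e (D (e.symm a)) := rfl

/-- Every derivation on a polynomial ring in two variables is determined by its values on the
variables, with an explicit formula. -/
lemma deriv_formula (D : Derivation k (MvPolynomial (Fin 2) k) (MvPolynomial (Fin 2) k))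
    (f : MvPolynomial (Fin 2) k) :
    D f = pderiv 0 f * D (X 0) + pderiv 1 f * D (X 1) := by
  have h : D = D (X 0) • (pderiv 0 : Derivation k (MvPolynomial (Fin 2) k) _)
      + D (X 1) • (pderiv 1 : Derivation k (MvPolynomial (Fin 2) k) _) := by
    apply MvPolynomial.derivation_ext
    intro i
    fin_cases i <;>
      simp [Derivation.add_apply, Derivation.smul_apply, pderiv_X_self, pderiv_X_of_ne,
        smul_eq_mul]
  conv_lhs => rw [h]
  simp only [Derivation.add_apply, Derivation.smul_apply, smul_eq_mul]
  ring

end Aux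

section Field

variable {k : Type*} [Field k] [CharZero k]

lemma charZero_mv : CharZero (MvPolynomial (Fin 2) k) :=
  charZero_of_injective_algebraMap (by
    rw [MvPolynomial.algebraMap_eq]; exact MvPolynomial.C_injective _ _)

lemma br_self_zero (P : PoissonBracket k (MvPolynomial (Fin 2) k))
    (f : MvPolynomial (Fin 2) k) : P.br f f = 0 := by
  have h := P.antisymm f f
  have h2 : (2 : MvPolynomial (Fin 2) k) * P.br f f = 0 := by
    rw [two_mul]
    rw [eq_neg_iff_add_eq_zero] at h
    exact h
  have := charZero_mv (k := k)
  rcases mul_eq_zero.mp h2 with h3 | h3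
  · exact absurd h3 two_ne_zero
  · exact h3

/-- The bracket of any two elements, via the fundamental formula. -/
lemma br_formula (P : PoissonBracket k (MvPolynomial (Fin 2) k))
    (f g : MvPolynomial (Fin 2) k) :
    P.br f g = (pderiv 0 f * pderiv 1 g - pderiv 1 f * pderiv 0 g) * P.br (X 0) (X 1) := by
  have h1 : P.br f g = pderiv 0 g * P.br f (X 0) + pderiv 1 g * P.br f (X 1) := by
    have := deriv_formula (P.toDer f) g
    simpa using this
  have h2 : P.br (X 0) f = pderiv 0 f * P.br (X 0) (X 0) + pderiv 1 f * P.br (X 0) (X 1) := by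
    have := deriv_formula (P.toDer (X 0)) f
    simpa using this
  have h3 : P.br (X 1) f = pderiv 0 f * P.br (X 1) (X 0) + pderiv 1 f * P.br (X 1) (X 1) := by
    have := deriv_formula (P.toDer (X 1)) f
    simpa using this
  rw [h1, P.antisymm f (X 0), P.antisymm f (X 1), h2, h3,
    br_self_zero, br_self_zero, P.antisymm (X 1) (X 0)]
  ring

lemma not_X_dvd_C {i : Fin 2} {a : k} (ha : a ≠ 0) :
    ¬ (X i : MvPolynomial (Fin 2) k) ∣ C a := by
  rintro ⟨w, hw⟩
  have := congrArg (eval (fun _ : Fin 2 => (0 : k))) hw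
  simp at this
  exact ha this

lemma not_X_dvd_X {i j : Fin 2} (h : i ≠ j) :
    ¬ (X i : MvPolynomial (Fin 2) k) ∣ X j := by
  rintro ⟨w, hw⟩
  have := congrArg (eval (fun l : Fin 2 => if l = j then (1 : k) else 0)) hw
  simp [h] at this

lemma prime_X0 : Prime (X 0 : MvPolynomial (Fin 2) k) := by
  rw [← MulEquiv.prime_iff ((MvPolynomial.finSuccEquiv k 1).toRingEquiv.toMulEquiv)]
  show Prime (MvPolynomial.finSuccEquiv k 1 (X 0))
  rw [finSuccEquiv_X_zero]
  exact Polynomial.prime_X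

lemma prime_X1 : Prime (X 1 : MvPolynomial (Fin 2) k) := by
  rw [← MulEquiv.prime_iff ((MvPolynomial.renameEquiv k (Equiv.swap (0 : Fin 2) 1)).toRingEquiv.toMulEquiv)]
  show Prime (MvPolynomial.renameEquiv k (Equiv.swap (0 : Fin 2) 1) (X 1))
  have h1 : MvPolynomial.renameEquiv k (Equiv.swap (0 : Fin 2) 1) (X 1) = X 0 := by
    simp [renameEquiv_apply, rename_X]
  rw [h1]
  exact prime_X0

lemma finSuccEquiv_C_eq (n : ℕ) (a : k) :
    MvPolynomial.finSuccEquiv k n (C a) = Polynomial.C (C a) := by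
  have h := (MvPolynomial.finSuccEquiv k n).commutes a
  rwa [MvPolynomial.algebraMap_eq, Polynomial.algebraMap_apply,
    MvPolynomial.algebraMap_eq] at h

lemma isUnit_eq_C {s : MvPolynomial (Fin 2) k} (h : IsUnit s) : ∃ a : k, a ≠ 0 ∧ s = C a := by
  have h2 : IsUnit (MvPolynomial.finSuccEquiv k 1 s) := h.map _
  obtain ⟨r, hr, hrs⟩ := Polynomial.isUnit_iff.mp h2
  have h3 : IsUnit (MvPolynomial.finSuccEquiv k 0 r) := hr.map _
  obtain ⟨r2, hr2, hrs2⟩ := Polynomial.isUnit_iff.mp h3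
  obtain ⟨a, rfl⟩ := C_surjective (Fin 0) r2
  have hra : r = C a := by
    apply (MvPolynomial.finSuccEquiv k 0).injective
    rw [finSuccEquiv_C_eq, ← hrs2]
  have hsa : s = C a := by
    apply (MvPolynomial.finSuccEquiv k 1).injective
    rw [finSuccEquiv_C_eq, ← hrs, hra]
  refine ⟨a, ?_, hsa⟩
  rintro rfl
  rw [hsa, map_zero] at h
  exact h.ne_zero rfl

lemma X0X1_ne_zero : (X 0 * X 1 : MvPolynomial (Fin 2) k) ≠ 0 :=
  mul_ne_zero (X_ne_zero _) (X_ne_zero _)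

end Field

/-- `k[x,y]` with `{x,y} = p·xy` (`p ≠ 0`) is Poisson isomorphic to
`k[xᵐ, yⁿ]` (a polynomial ring in two variables with bracket `{u,v} = pmn·uv`)
if and only if `m = n = 1`. -/
theorem skew_two_variable_fixed_ring_iso_iff
    {k : Type*} [Field k] [IsAlgClosed k] [CharZero k]
    (p : k) (hp : p ≠ 0) (m n : ℕ) (hm : 0 < m) (hn : 0 < n)
    (P Q : PoissonBracket k (MvPolynomial (Fin 2) k))
    (hP : P.br (X 0) (X 1) = p • (X 0 * X 1))
    (hQ : Q.br (X 0) (X 1) = (p * (m : k) * (n : k)) • (X 0 * X 1)) :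
    (∃ φ : MvPolynomial (Fin 2) k ≃ₐ[k] MvPolynomial (Fin 2) k,
        ∀ a b, φ (Q.br a b) = P.br (φ a) (φ b)) ↔ (m = 1 ∧ n = 1) := by
  constructor
  · rintro ⟨φ, hφ⟩
    set F : MvPolynomial (Fin 2) k := φ (X 0) with hF
    set G : MvPolynomial (Fin 2) k := φ (X 1) with hG
    set J : MvPolynomial (Fin 2) k :=
      pderiv 0 F * pderiv 1 G - pderiv 1 F * pderiv 0 G with hJ
    -- the key equation
    have key := hφ (X 0) (X 1)
    rw [hQ, br_formula P F G, hP] at key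
    rw [map_smul, map_mul] at key
    rw [smul_eq_C_mul, smul_eq_C_mul, map_mul, map_mul] at key
    -- key : C p * C m * C n * (F * G) = J * (C p * (X 0 * X 1))
    have hCp : (C p : MvPolynomial (Fin 2) k) ≠ 0 := fun h => hp (C_injective (Fin 2) k (by simpa using h))
    have E1 : (C (m : k) * C (n : k) : MvPolynomial (Fin 2) k) * (F * G) = J * (X 0 * X 1) := by
      apply mul_left_cancel₀ hCp
      rw [hJ]
      linear_combination key
    -- the Jacobian is a unit
    set D0 := conjDer φ (pderiv 0) with hD0
    set D1 := conjDer φ (pderiv 1) with hD1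
    have hD0F : D0 F = 1 := by simp [hD0, hF]
    have hD0G : D0 G = 0 := by simp [hD0, hG, pderiv_X_of_ne (show (1 : Fin 2) ≠ 0 by decide)]
    have hD1F : D1 F = 0 := by simp [hD1, hF, pderiv_X_of_ne (show (0 : Fin 2) ≠ 1 by decide)]
    have hD1G : D1 G = 1 := by simp [hD1, hG]
    have e1 := deriv_formula D0 F; rw [hD0F] at e1
    have e2 := deriv_formula D0 G; rw [hD0G] at e2
    have e3 := deriv_formula D1 F; rw [hD1F] at e3
    have e4 := deriv_formula D1 G; rw [hD1G] at e4
    set u : MvPolynomial (Fin 2) k := D0 (X 0) * D1 (X 1) - D0 (X 1) * D1 (X 0) with hu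
    have e14 := congrArg₂ HMul.hMul e1 e4
    have e32 := congrArg₂ HMul.hMul e3 e2
    have hJu : J * u = 1 := by
      rw [hJ, hu]
      linear_combination e32 - e14
    -- nonzero constants
    have hmk : (m : k) ≠ 0 := Nat.cast_ne_zero.mpr hm.ne'
    have hnk : (n : k) ≠ 0 := Nat.cast_ne_zero.mpr hn.ne'
    -- divisibility case analysis
    have hd0 : (X 0 : MvPolynomial (Fin 2) k) ∣ C (m : k) * C (n : k) * (F * G) := by
      rw [E1]; exact ⟨J * X 1, by ring⟩
    have hd1 : (X 1 : MvPolynomial (Fin 2) k) ∣ C (m : k) * C (n : k) * (F * G) := by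
      rw [E1]; exact ⟨J * X 0, by ring⟩
    have hd0' : (X 0 : MvPolynomial (Fin 2) k) ∣ F ∨ (X 0 : MvPolynomial (Fin 2) k) ∣ G := by
      rcases (prime_X0.dvd_mul).mp hd0 with h | h
      · rw [← map_mul] at h
        exact absurd h (not_X_dvd_C (mul_ne_zero hmk hnk))
      · exact (prime_X0.dvd_mul).mp h
    have hd1' : (X 1 : MvPolynomial (Fin 2) k) ∣ F ∨ (X 1 : MvPolynomial (Fin 2) k) ∣ G := by
      rcases (prime_X1.dvd_mul).mp hd1 with h | h
      · rw [← map_mul] at h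
        exact absurd h (not_X_dvd_C (mul_ne_zero hmk hnk))
      · exact (prime_X1.dvd_mul).mp h
    -- helper: if G is a unit then contradiction (J = 0)
    have hGunit : IsUnit G → False := by
      intro hGu
      obtain ⟨b, _, hb⟩ := isUnit_eq_C hGu
      rw [hJ, hb] at hJu
      simp [pderiv_C] at hJu
    have hFunit : IsUnit F → False := by
      intro hFu
      obtain ⟨a, _, ha⟩ := isUnit_eq_C hFu
      rw [hJ, ha] at hJu
      simp [pderiv_C] at hJu
    rcases hd0' with hF0 | hG0
    · rcases hd1' with hF1 | hG1
      · -- X0 ∣ F and X1 ∣ F: G is a unit, contradiction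
        obtain ⟨s, hs⟩ := hF0
        have : (X 1 : MvPolynomial (Fin 2) k) ∣ s := by
          rcases (prime_X1.dvd_mul).mp (hs ▸ hF1) with h | h
          · exact absurd h (not_X_dvd_X (by decide))
          · exact h
        obtain ⟨t, ht⟩ := this
        have hcanc : (X 0 * X 1 : MvPolynomial (Fin 2) k) *
            (C (m : k) * C (n : k) * (t * G)) = (X 0 * X 1) * J := by
          rw [hs, ht] at E1
          linear_combination E1
        have hE2 := mul_left_cancel₀ X0X1_ne_zero hcanc
        exact absurd (IsUnit.of_mul_eq_one (a := G) (C (m : k) * C (n : k) * t * u)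
          (by linear_combination u * hE2 + hJu)) (fun h => hGunit h)
      · -- X0 ∣ F and X1 ∣ G: main case
        obtain ⟨s, hs⟩ := hF0
        obtain ⟨t, ht⟩ := hG1
        have hcanc : (X 0 * X 1 : MvPolynomial (Fin 2) k) *
            (C (m : k) * C (n : k) * (s * t)) = (X 0 * X 1) * J := by
          rw [hs, ht] at E1
          linear_combination E1
        have hE2 := mul_left_cancel₀ X0X1_ne_zero hcanc
        -- s and t are units
        obtain ⟨a, ha0, ha⟩ := isUnit_eq_C (IsUnit.of_mul_eq_one (a := s)
          (C (m : k) * C (n : k) * t * u) (by linear_combination u * hE2 + hJu))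
        obtain ⟨b, hb0, hb⟩ := isUnit_eq_C (IsUnit.of_mul_eq_one (a := t)
          (C (m : k) * C (n : k) * s * u) (by linear_combination u * hE2 + hJu))
        -- compute J
        have pd1 : pderiv 0 (X 0 * C a : MvPolynomial (Fin 2) k) = C a := by
          simp [pderiv_mul]
        have pd2 : pderiv 1 (X 0 * C a : MvPolynomial (Fin 2) k) = 0 := by
          simp [pderiv_mul, pderiv_X_of_ne (show (0 : Fin 2) ≠ 1 by decide)]
        have pd3 : pderiv 0 (X 1 * C b : MvPolynomial (Fin 2) k) = 0 := by
          simp [pderiv_mul, pderiv_X_of_ne (show (1 : Fin 2) ≠ 0 by decide)]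
        have pd4 : pderiv 1 (X 1 * C b : MvPolynomial (Fin 2) k) = C b := by
          simp [pderiv_mul]
        have hJval : J = C a * C b := by
          rw [hJ, hs, ht, ha, hb, pd1, pd2, pd3, pd4]
          ring
        rw [hs, ht, ha, hb, hJval] at E1
        have hkey := congrArg (eval (fun _ : Fin 2 => (1 : k))) E1
        simp at hkey
        have hab : a * b ≠ 0 := mul_ne_zero ha0 hb0
        have hmn1 : (m : k) * (n : k) = 1 := by
          have h2 : ((m : k) * (n : k)) * (a * b) = 1 * (a * b) := by
            linear_combination hkey
          exact mul_right_cancel₀ hab h2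
        have hcast : ((m * n : ℕ) : k) = ((1 : ℕ) : k) := by push_cast; linear_combination hmn1
        have hmn : m * n = 1 := Nat.cast_injective hcast
        exact ⟨Nat.eq_one_of_mul_eq_one_right hmn, Nat.eq_one_of_mul_eq_one_left hmn⟩
    · rcases hd1' with hF1 | hG1
      · -- X1 ∣ F and X0 ∣ G: leads to mn = -1, contradiction
        obtain ⟨s, hs⟩ := hF1
        obtain ⟨t, ht⟩ := hG0
        have hcanc : (X 0 * X 1 : MvPolynomial (Fin 2) k) *
            (C (m : k) * C (n : k) * (s * t)) = (X 0 * X 1) * J := by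
          rw [hs, ht] at E1
          linear_combination E1
        have hE2 := mul_left_cancel₀ X0X1_ne_zero hcanc
        obtain ⟨a, ha0, ha⟩ := isUnit_eq_C (IsUnit.of_mul_eq_one (a := s)
          (C (m : k) * C (n : k) * t * u) (by linear_combination u * hE2 + hJu))
        obtain ⟨b, hb0, hb⟩ := isUnit_eq_C (IsUnit.of_mul_eq_one (a := t)
          (C (m : k) * C (n : k) * s * u) (by linear_combination u * hE2 + hJu))
        have pd1 : pderiv 0 (X 1 * C a : MvPolynomial (Fin 2) k) = 0 := by
          simp [pderiv_mul, pderiv_X_of_ne (show (1 : Fin 2) ≠ 0 by decide)]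
        have pd2 : pderiv 1 (X 1 * C a : MvPolynomial (Fin 2) k) = C a := by
          simp [pderiv_mul]
        have pd3 : pderiv 0 (X 0 * C b : MvPolynomial (Fin 2) k) = C b := by
          simp [pderiv_mul]
        have pd4 : pderiv 1 (X 0 * C b : MvPolynomial (Fin 2) k) = 0 := by
          simp [pderiv_mul, pderiv_X_of_ne (show (0 : Fin 2) ≠ 1 by decide)]
        have hJval : J = -(C a * C b) := by
          rw [hJ, hs, ht, ha, hb, pd1, pd2, pd3, pd4]
          ring
        rw [hs, ht, ha, hb, hJval] at E1
        have hkey := congrArg (eval (fun _ : Fin 2 => (1 : k))) E1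
        simp at hkey
        have hab : a * b ≠ 0 := mul_ne_zero ha0 hb0
        have hmn1 : (m : k) * (n : k) = -1 := by
          have h2 : ((m : k) * (n : k)) * (a * b) = (-1) * (a * b) := by
            linear_combination hkey
          exact mul_right_cancel₀ hab h2
        exfalso
        have hcast : ((m * n + 1 : ℕ) : k) = 0 := by push_cast; linear_combination hmn1
        have := Nat.cast_eq_zero.mp hcast
        omega
      · -- X0 ∣ G and X1 ∣ G: F is a unit, contradiction
        obtain ⟨s, hs⟩ := hG0
        have : (X 1 : MvPolynomial (Fin 2) k) ∣ s := by
          rcases (prime_X1.dvd_mul).mp (hs ▸ hG1) with h | h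
          · exact absurd h (not_X_dvd_X (by decide))
          · exact h
        obtain ⟨t, ht⟩ := this
        have hcanc : (X 0 * X 1 : MvPolynomial (Fin 2) k) *
            (C (m : k) * C (n : k) * (F * t)) = (X 0 * X 1) * J := by
          rw [hs, ht] at E1
          linear_combination E1
        have hE2 := mul_left_cancel₀ X0X1_ne_zero hcanc
        exact absurd (IsUnit.of_mul_eq_one (a := F) (C (m : k) * C (n : k) * t * u)
          (by linear_combination u * hE2 + hJu)) (fun h => hFunit h)
  · rintro ⟨rfl, rfl⟩
    refine ⟨AlgEquiv.refl, fun a b => ?_⟩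
    simp only [AlgEquiv.coe_refl, id_eq]
    rw [br_formula Q a b, br_formula P a b, hP, hQ]
    norm_num
end

section
/- Let A = k[x, y, z] be the Poisson algebra with Jacobian bracket determined by the potential f = (p/3)(x³ + y³ + z³) with p ≠ 0, i.e., {x,y} = p·z², {y,z} = p·x², {z,x} = p·y². Then A has no nonzero Poisson normal elements of degree one; consequently A has no Poisson reflections. -/
open MvPolynomial

namespace JacobianPotentialAux

variable {k : Type*} [Field k] [CharZero k]

lemma degree_fin3 (d : Fin 3 →₀ ℕ) : d.degree = d 0 + d 1 + d 2 := by
  rw [Finsupp.degree_apply, Finset.sum_subset (Finset.subset_univ d.support)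
    (fun i _ hi => Finsupp.notMem_support_iff.mp hi), Fin.sum_univ_three]

lemma homog_one_eq (u : MvPolynomial (Fin 3) k) (h : u.IsHomogeneous 1) :
    u = coeff (Finsupp.single 0 1) u • X 0 + coeff (Finsupp.single 1 1) u • X 1
      + coeff (Finsupp.single 2 1) u • X 2 := by
  ext m
  simp only [coeff_add, coeff_smul, coeff_X', smul_eq_mul]
  by_cases hm : m.degree = 1
  · rw [degree_fin3] at hm
    have h3 : (m 0 = 1 ∧ m 1 = 0 ∧ m 2 = 0) ∨ (m 0 = 0 ∧ m 1 = 1 ∧ m 2 = 0) ∨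
        (m 0 = 0 ∧ m 1 = 0 ∧ m 2 = 1) := by omega
    rcases h3 with ⟨h1, h2, h3⟩ | ⟨h1, h2, h3⟩ | ⟨h1, h2, h3⟩
    · have hm' : m = Finsupp.single (0 : Fin 3) 1 := by
        ext j; fin_cases j <;> simp [Finsupp.single_apply, h1, h2, h3]
      subst hm'
      simp [Finsupp.single_eq_single_iff]
    · have hm' : m = Finsupp.single (1 : Fin 3) 1 := by
        ext j; fin_cases j <;> simp [Finsupp.single_apply, h1, h2, h3]
      subst hm'
      simp [Finsupp.single_eq_single_iff]
    · have hm' : m = Finsupp.single (2 : Fin 3) 1 := by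
        ext j; fin_cases j <;> simp [Finsupp.single_apply, h1, h2, h3]
      subst hm'
      simp [Finsupp.single_eq_single_iff]
  · rw [h.coeff_eq_zero hm]
    have hs : ∀ i : Fin 3, Finsupp.single i 1 ≠ m := by
      intro i hi
      apply hm
      rw [← hi, degree_fin3]
      fin_cases i <;> simp [Finsupp.single_apply]
    rw [if_neg (hs 0), if_neg (hs 1), if_neg (hs 2)]
    ring

lemma br_self (P : PoissonBracket k (MvPolynomial (Fin 3) k))
    (v : MvPolynomial (Fin 3) k) : P.br v v = 0 := by
  have h := P.antisymm v v
  have h2 : (2 : MvPolynomial (Fin 3) k) * P.br v v = 0 := by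
    rw [two_mul]; nth_rewrite 1 [h]; exact neg_add_cancel _
  rcases mul_eq_zero.mp h2 with h3 | h3
  · exact absurd h3 two_ne_zero
  · exact h3

/-- Core of part 1: only divisibility of brackets with `X 0` and `X 2` is needed. -/
lemma core (p : k) (hp : p ≠ 0)
    (P : PoissonBracket k (MvPolynomial (Fin 3) k))
    (hxy : P.br (X 0) (X 1) = p • (X 2) ^ 2)
    (hyz : P.br (X 1) (X 2) = p • (X 0) ^ 2)
    (hzx : P.br (X 2) (X 0) = p • (X 1) ^ 2)
    (u : MvPolynomial (Fin 3) k) (hu : u.IsHomogeneous 1)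
    (h0 : ∃ c, P.br u (X 0) = u * c) (h2 : ∃ c, P.br u (X 2) = u * c) :
    u = 0 := by
  set a := coeff (Finsupp.single 0 1) u with ha'
  set b := coeff (Finsupp.single 1 1) u with hb'
  set c := coeff (Finsupp.single 2 1) u with hc'
  have hu' : u = a • X 0 + b • X 1 + c • X 2 := homog_one_eq u hu
  have byx : P.br (X 1) (X 0) = -(p • (X 2 : MvPolynomial (Fin 3) k) ^ 2) := by
    rw [P.antisymm, hxy]
  have bxz : P.br (X 0) (X 2) = -(p • (X 1 : MvPolynomial (Fin 3) k) ^ 2) := by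
    rw [P.antisymm, hzx]
  have hbr0 : P.br u (X 0) = (c * p) • (X 1 : MvPolynomial (Fin 3) k) ^ 2
      - (b * p) • (X 2 : MvPolynomial (Fin 3) k) ^ 2 := by
    rw [hu', P.add_left, P.add_left, P.smul_left, P.smul_left, P.smul_left,
      br_self, byx, hzx]
    module
  have hbr2 : P.br u (X 2) = (b * p) • (X 0 : MvPolynomial (Fin 3) k) ^ 2
      - (a * p) • (X 1 : MvPolynomial (Fin 3) k) ^ 2 := by
    rw [hu', P.add_left, P.add_left, P.smul_left, P.smul_left, P.smul_left,
      br_self, hyz, bxz]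
    module
  obtain ⟨c0, hc0⟩ := h0
  obtain ⟨c2, hc2⟩ := h2
  rw [hbr0] at hc0
  rw [hbr2] at hc2
  have hvu : ∀ v : Fin 3 → k, eval v u = a * v 0 + b * v 1 + c * v 2 := by
    intro v; rw [hu']; simp [smul_eval]
  have ev0 : ∀ v : Fin 3 → k, a * v 0 + b * v 1 + c * v 2 = 0 →
      (c * p) * (v 1) ^ 2 - (b * p) * (v 2) ^ 2 = 0 := by
    intro v hv
    have h := congrArg (eval v) hc0
    simp only [map_sub, smul_eval, map_pow, eval_X, eval_mul] at h
    rw [hvu v, hv, zero_mul] at h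
    exact h
  have ev2 : ∀ v : Fin 3 → k, a * v 0 + b * v 1 + c * v 2 = 0 →
      (b * p) * (v 0) ^ 2 - (a * p) * (v 1) ^ 2 = 0 := by
    intro v hv
    have h := congrArg (eval v) hc2
    simp only [map_sub, smul_eval, map_pow, eval_X, eval_mul] at h
    rw [hvu v, hv, zero_mul] at h
    exact h
  have e1 := ev0 ![b, -a, 0] (by simp; ring)
  have e2 := ev0 ![c, 0, -a] (by simp; ring)
  have e4 := ev0 ![0, c, -b] (by simp; ring)
  have e3 := ev2 ![b, -a, 0] (by simp; ring)
  simp only [Matrix.cons_val_zero, Matrix.cons_val_one, Matrix.head_cons, Matrix.cons_val_two, Matrix.tail_cons] at e1 e2 e3 e4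
  -- extract scalar equations
  have E1 : c * a ^ 2 = 0 := by
    have hpe : p * (c * a ^ 2) = 0 := by linear_combination e1
    exact (mul_eq_zero.mp hpe).resolve_left hp
  have E2 : b * a ^ 2 = 0 := by
    have hpe : p * (b * a ^ 2) = 0 := by linear_combination -e2
    exact (mul_eq_zero.mp hpe).resolve_left hp
  have E3 : b ^ 3 - a ^ 3 = 0 := by
    have hpe : p * (b ^ 3 - a ^ 3) = 0 := by linear_combination e3
    exact (mul_eq_zero.mp hpe).resolve_left hp
  have E4 : c ^ 3 - b ^ 3 = 0 := by
    have hpe : p * (c ^ 3 - b ^ 3) = 0 := by linear_combination e4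
    exact (mul_eq_zero.mp hpe).resolve_left hp
  have ha : a = 0 := by
    by_contra ha
    have ha2 : a ^ 2 ≠ 0 := pow_ne_zero _ ha
    have hc : c = 0 := (mul_eq_zero.mp E1).resolve_right ha2
    have hb : b = 0 := (mul_eq_zero.mp E2).resolve_right ha2
    rw [hb] at E3
    have : a ^ 3 = 0 := by linear_combination -E3
    exact ha (pow_eq_zero_iff (by norm_num)|>.mp this)
  have hb : b = 0 := by
    rw [ha] at E3
    have : b ^ 3 = 0 := by linear_combination E3
    exact pow_eq_zero_iff (by norm_num)|>.mp this
  have hc : c = 0 := by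
    rw [hb] at E4
    have : c ^ 3 = 0 := by linear_combination E4
    exact pow_eq_zero_iff (by norm_num)|>.mp this
  rw [hu', ha, hb, hc]
  simp

lemma matrix_smul_sum (Amat Bmat : Matrix (Fin 3) (Fin 3) k) (h : Amat * Bmat = 1) (i : Fin 3) :
    ∑ j : Fin 3, Amat i j • (∑ l : Fin 3, Bmat j l • (X l : MvPolynomial (Fin 3) k)) = X i := by
  simp_rw [Finset.smul_sum, smul_smul]
  rw [Finset.sum_comm]
  have hl : ∀ l : Fin 3, ∑ j : Fin 3, (Amat i j * Bmat j l) • (X l : MvPolynomial (Fin 3) k)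
      = ((Amat * Bmat) i l) • X l := by
    intro l; rw [← Finset.sum_smul, Matrix.mul_apply]
  rw [Finset.sum_congr rfl fun l _ => hl l, h]
  simp [Matrix.one_apply, ite_smul]

lemma scaleHom_monomial (T : MvPolynomial (Fin 3) k →ₐ[k] MvPolynomial (Fin 3) k) (ζ : k)
    (h0 : T (X 0) = ζ • X 0) (h1 : T (X 1) = X 1) (h2 : T (X 2) = X 2)
    (m : Fin 3 →₀ ℕ) (c : k) :
    T (monomial m c) = ζ ^ (m 0) • monomial m c := by
  have hC : T (C c) = C c := by
    rw [show (C c : MvPolynomial (Fin 3) k) = algebraMap k _ c from rfl, AlgHom.commutes]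
  rw [monomial_eq, Finsupp.prod_fintype _ _ (fun i => pow_zero _), Fin.prod_univ_three]
  rw [map_mul, map_mul, map_mul, map_pow, map_pow, map_pow, h0, h1, h2, hC, smul_pow]
  simp only [Algebra.smul_def, algebraMap_eq]
  ring

lemma dvd_of_eigen (T : MvPolynomial (Fin 3) k →ₐ[k] MvPolynomial (Fin 3) k) (ζ : k)
    (hζ1 : ζ ≠ 1)
    (h0 : T (X 0) = ζ • X 0) (h1 : T (X 1) = X 1) (h2 : T (X 2) = X 2)
    (w : MvPolynomial (Fin 3) k) (hw : T w = ζ • w) :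
    (X 0 : MvPolynomial (Fin 3) k) ∣ w := by
  have hcoeff : ∀ m : Fin 3 →₀ ℕ, ζ ^ (m 0) * coeff m w = ζ * coeff m w := by
    intro m
    have hL : coeff m (T w) = ζ ^ (m 0) * coeff m w := by
      conv_lhs => rw [w.as_sum, map_sum]
      rw [coeff_sum]
      simp only [scaleHom_monomial T ζ h0 h1 h2, coeff_smul, coeff_monomial, smul_eq_mul,
        mul_ite, mul_zero]
      rw [Finset.sum_ite_eq' w.support m]
      split
      · rfl
      · rw [notMem_support_iff.mp ‹_›, mul_zero]
    have hR : coeff m (T w) = ζ * coeff m w := by rw [hw, coeff_smul, smul_eq_mul]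
    rw [← hL, hR]
  have hsupp : ∀ m ∈ w.support, m 0 ≠ 0 := by
    intro m hm hm0
    have h := hcoeff m
    rw [hm0, pow_zero, one_mul] at h
    have : (1 - ζ) * coeff m w = 0 := by linear_combination h
    rcases mul_eq_zero.mp this with h' | h'
    · exact hζ1 (by linear_combination -h')
    · exact (mem_support_iff.mp hm) h'
  conv_rhs => rw [w.as_sum]
  exact Finset.dvd_sum fun m hm => X_dvd_monomial.mpr (Or.inr (hsupp m hm))

end JacobianPotentialAux

open JacobianPotentialAux in
/-- For `A = k[x,y,z]` with Jacobian bracket of the potential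
`(p/3)(x³+y³+z³)`, `p ≠ 0`: `A` has no nonzero degree-one Poisson normal elements,
and consequently no Poisson reflections. -/
theorem jacobian_potential_no_reflections
    {k : Type*} [Field k] [IsAlgClosed k] [CharZero k]
    (p : k) (hp : p ≠ 0)
    (P : PoissonBracket k (MvPolynomial (Fin 3) k))
    (hxy : P.br (X 0) (X 1) = p • (X 2) ^ 2)
    (hyz : P.br (X 1) (X 2) = p • (X 0) ^ 2)
    (hzx : P.br (X 2) (X 0) = p • (X 1) ^ 2) :
    (∀ u : MvPolynomial (Fin 3) k, u.IsHomogeneous 1 →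
      (∀ a, ∃ c, P.br u a = u * c) → u = 0) ∧
    ¬∃ (g : MvPolynomial (Fin 3) k ≃ₐ[k] MvPolynomial (Fin 3) k)
        (ζ : k) (y : Fin 3 → MvPolynomial (Fin 3) k),
        (∀ a b, g (P.br a b) = P.br (g a) (g b)) ∧
        (∃ m : ℕ, 0 < m ∧ ζ ^ m = 1) ∧ ζ ≠ 1 ∧
        (∀ i, (y i).IsHomogeneous 1) ∧ LinearIndependent k y ∧
        g (y 0) = ζ • y 0 ∧ (∀ i, i ≠ 0 → g (y i) = y i) := by
  constructor
  · intro u hu h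
    exact core p hp P hxy hyz hzx u hu (h (X 0)) (h (X 2))
  · rintro ⟨g, ζ, y, hg, ⟨m, hm0, hζm⟩, hζ1, hyhom, hyind, hgy0, hgyi⟩
    classical
    -- bracket is additive and k-linear in the second argument
    have add_right : ∀ a b c : MvPolynomial (Fin 3) k,
        P.br a (b + c) = P.br a b + P.br a c := by
      intro a b c
      rw [P.antisymm, P.add_left, neg_add, ← P.antisymm, ← P.antisymm]
    have smul_right : ∀ (r : k) (a b : MvPolynomial (Fin 3) k),
        P.br a (r • b) = r • P.br a b := by
      intro r a b
      rw [P.antisymm, P.smul_left, ← smul_neg, ← P.antisymm]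
    have sum_right : ∀ (a : MvPolynomial (Fin 3) k) (f : Fin 3 → MvPolynomial (Fin 3) k),
        P.br a (∑ j : Fin 3, f j) = ∑ j : Fin 3, P.br a (f j) := by
      intro a f
      exact map_sum (AddMonoidHom.mk' (P.br a) (fun x z => add_right a x z)) f Finset.univ
    -- the coefficient matrix of the `y i`
    set N : Matrix (Fin 3) (Fin 3) k :=
      Matrix.of fun i j => coeff (Finsupp.single j 1) (y i) with hNdef
    have hyrep : ∀ i, y i = ∑ j : Fin 3, N i j • X j := by
      intro i
      rw [Fin.sum_univ_three]
      exact homog_one_eq (y i) (hyhom i)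
    have hdet : N.det ≠ 0 := by
      intro hdet
      obtain ⟨v, hv0, hvN⟩ := Matrix.exists_vecMul_eq_zero_iff.mpr hdet
      apply hv0
      have hsum : ∑ i : Fin 3, v i • y i = 0 := by
        simp_rw [hyrep, Finset.smul_sum, smul_smul]
        rw [Finset.sum_comm]
        have hz : ∀ j : Fin 3, ∑ i : Fin 3, (v i * N i j) • (X j : MvPolynomial (Fin 3) k)
            = 0 := by
          intro j
          rw [← Finset.sum_smul]
          have hj := congrFun hvN j
          simp only [Matrix.vecMul, dotProduct, Pi.zero_apply] at hj
          rw [hj, zero_smul]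
        rw [Finset.sum_congr rfl fun j _ => hz j]
        simp
      funext i
      exact Fintype.linearIndependent_iff.mp hyind v hsum i
    have hNunit : IsUnit N.det := Ne.isUnit hdet
    set M := N⁻¹ with hMdef
    have hNM : N * M = 1 := Matrix.mul_nonsing_inv N hNunit
    have hMN : M * N = 1 := Matrix.nonsing_inv_mul N hNunit
    set F : MvPolynomial (Fin 3) k →ₐ[k] MvPolynomial (Fin 3) k := aeval y with hFdef
    set Ψ : MvPolynomial (Fin 3) k →ₐ[k] MvPolynomial (Fin 3) k :=
      aeval (fun i => ∑ j : Fin 3, M i j • (X j : MvPolynomial (Fin 3) k)) with hΨdef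
    have hFX : ∀ i, F (X i) = y i := fun i => aeval_X y i
    have hΨX : ∀ i, Ψ (X i) = ∑ j : Fin 3, M i j • (X j : MvPolynomial (Fin 3) k) :=
      fun i => aeval_X _ i
    have hFΨ : ∀ q, F (Ψ q) = q := by
      have hcomp : F.comp Ψ = AlgHom.id k (MvPolynomial (Fin 3) k) := by
        apply algHom_ext
        intro i
        rw [AlgHom.comp_apply, AlgHom.id_apply, hΨX, map_sum]
        simp_rw [map_smul, hFX, hyrep]
        exact matrix_smul_sum M N hMN i
      intro q
      exact DFunLike.congr_fun hcomp q
    have hΨF : ∀ q, Ψ (F q) = q := by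
      have hcomp : Ψ.comp F = AlgHom.id k (MvPolynomial (Fin 3) k) := by
        apply algHom_ext
        intro i
        rw [AlgHom.comp_apply, AlgHom.id_apply, hFX, hyrep, map_sum]
        simp_rw [map_smul, hΨX]
        exact matrix_smul_sum N M hNM i
      intro q
      exact DFunLike.congr_fun hcomp q
    -- the conjugated automorphism
    set T : MvPolynomial (Fin 3) k →ₐ[k] MvPolynomial (Fin 3) k :=
      Ψ.comp (g.toAlgHom.comp F) with hTdef
    have hTq : ∀ q, T q = Ψ (g (F q)) := fun q => rfl
    have hT0 : T (X 0) = ζ • X 0 := by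
      rw [hTq, hFX, hgy0, map_smul, ← hFX, hΨF]
    have hT1 : T (X 1) = X 1 := by
      rw [hTq, hFX, hgyi 1 (by decide), ← hFX, hΨF]
    have hT2 : T (X 2) = X 2 := by
      rw [hTq, hFX, hgyi 2 (by decide), ← hFX, hΨF]
    -- each bracket of y 0 with y j lies in (y 0)·A
    have hyj : ∀ j : Fin 3, ∃ c, P.br (y 0) (y j) = y 0 * c := by
      intro j
      by_cases hj : j = 0
      · subst hj
        exact ⟨0, by rw [br_self, mul_zero]⟩
      · set v := P.br (y 0) (y j) with hv
        have hgv : g v = ζ • v := by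
          rw [hv, hg, hgy0, hgyi j hj, P.smul_left]
        have hTw : T (Ψ v) = ζ • Ψ v := by
          rw [hTq, hFΨ, hgv, map_smul]
        obtain ⟨w', hw'⟩ := dvd_of_eigen T ζ hζ1 hT0 hT1 hT2 (Ψ v) hTw
        refine ⟨F w', ?_⟩
        rw [← hFΨ v, hw', map_mul, hFX]
    have hnormal : ∀ i : Fin 3, ∃ c, P.br (y 0) (X i) = y 0 * c := by
      intro i
      have hXi : (X i : MvPolynomial (Fin 3) k) = ∑ j : Fin 3, M i j • y j := by
        have h1 : F (Ψ (X i)) = ∑ j : Fin 3, M i j • y j := by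
          rw [hΨX, map_sum]
          simp_rw [map_smul, hFX]
        exact (hFΨ (X i)).symm.trans h1
      choose cf hcf using hyj
      refine ⟨∑ j : Fin 3, M i j • cf j, ?_⟩
      rw [hXi, sum_right, Finset.mul_sum]
      refine Finset.sum_congr rfl fun j _ => ?_
      rw [smul_right, hcf j, mul_smul_comm]
    have hy0 : y 0 = 0 :=
      core p hp P hxy hyz hzx (y 0) (hyhom 0) (hnormal 0) (hnormal 2)
    exact hyind.ne_zero 0 hy0
end

section
/- Let A = k[x, y, z] with Poisson bracket {x,y} = q·xy, {y,z} = q·yz, {z,x} = q·xz for some q ∈ k^×, and let g be the graded Poisson automorphism with g(x) = ζ·x, g(y) = y, g(z) = z, where ζ is a primitive n-th root of unity, n > 1. Then the fixed subring A^⟨g⟩ equals k[xⁿ, y, z] with bracket {xⁿ, y} = nq·xⁿy, {y, z} = q·yz, {z, xⁿ} = nq·xⁿz, and the modular derivation of A^⟨g⟩ is nonzero; hence A^⟨g⟩ is not unimodular. -/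
open MvPolynomial

lemma aux_monomial_fin3 {k : Type*} [Field k] (d : Fin 3 →₀ ℕ) (c : k) :
    monomial d c = C c * X 0 ^ d 0 * X 1 ^ d 1 * X 2 ^ d 2 := by
  rw [monomial_eq, Finsupp.prod_fintype _ _ (by simp), Fin.prod_univ_three]
  ring

lemma aux_g_monomial {k : Type*} [Field k] (ζ : k)
    (g : MvPolynomial (Fin 3) k ≃ₐ[k] MvPolynomial (Fin 3) k)
    (hgx : g (X 0) = ζ • X 0) (hgy : g (X 1) = X 1) (hgz : g (X 2) = X 2)
    (d : Fin 3 →₀ ℕ) (c : k) :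
    g (monomial d c) = ζ ^ (d 0) • monomial d c := by
  have hc : g (C c) = C c := by
    rw [← algebraMap_eq]; exact g.commutes c
  rw [aux_monomial_fin3, map_mul, map_mul, map_mul, map_pow, map_pow, map_pow,
    hgx, hgy, hgz, smul_pow, hc, smul_eq_C_mul, smul_eq_C_mul]
  ring

lemma aux_coeff_g {k : Type*} [Field k] (ζ : k)
    (g : MvPolynomial (Fin 3) k ≃ₐ[k] MvPolynomial (Fin 3) k)
    (hgx : g (X 0) = ζ • X 0) (hgy : g (X 1) = X 1) (hgz : g (X 2) = X 2)
    (p : MvPolynomial (Fin 3) k) (d : Fin 3 →₀ ℕ) :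
    coeff d (g p) = ζ ^ (d 0) * coeff d p := by
  conv_lhs => rw [← support_sum_monomial_coeff p]
  rw [map_sum]
  simp_rw [aux_g_monomial ζ g hgx hgy hgz]
  rw [coeff_sum]
  simp_rw [coeff_smul, coeff_monomial]
  rw [Finset.sum_eq_single d]
  · simp [smul_eq_mul]
  · intro b _ hb; simp [hb]
  · intro hd
    rw [MvPolynomial.notMem_support_iff] at hd
    simp [hd]

lemma aux_br_one {k A : Type*} [CommRing k] [CommRing A] [Algebra k A]
    (P : PoissonBracket k A) (a : A) : P.br a 1 = 0 := by
  have h := P.leibniz a 1 1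
  rw [mul_one, one_mul, mul_one, right_eq_add] at h
  exact h

lemma aux_br_self {k : Type*} [Field k] [CharZero k]
    (P : PoissonBracket k (MvPolynomial (Fin 3) k)) (a : MvPolynomial (Fin 3) k) :
    P.br a a = 0 := by
  have h := P.antisymm a a
  have h2 : (2 : k) • P.br a a = 0 := by
    rw [two_smul]
    nth_rewrite 1 [h]
    ring
  rcases smul_eq_zero.mp h2 with h | h
  · exact absurd h two_ne_zero
  · exact h

lemma aux_br_pow {k : Type*} [Field k] [CharZero k] (q : k)
    (P : PoissonBracket k (MvPolynomial (Fin 3) k))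
    (hxy : P.br (X 0) (X 1) = q • (X 0 * X 1))
    (hzx : P.br (X 2) (X 0) = q • (X 2 * X 0)) (m : ℕ) :
    P.br (X 1) (X 0 ^ m) = -(((m : k) * q) • (X 0 ^ m * X 1)) ∧
    P.br (X 2) (X 0 ^ m) = ((m : k) * q) • (X 0 ^ m * X 2) := by
  induction m with
  | zero => simp [aux_br_one]
  | succ m ih =>
    obtain ⟨ih1, ih2⟩ := ih
    have hyx : P.br (X 1) (X 0) = -(q • (X 0 * X 1)) := by
      rw [P.antisymm, hxy]
    constructor
    · rw [pow_succ, P.leibniz, ih1, hyx]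
      rw [smul_eq_C_mul, smul_eq_C_mul, smul_eq_C_mul]
      simp only [Nat.cast_add, Nat.cast_one, map_add, map_mul, map_one]
      ring
    · rw [pow_succ, P.leibniz, ih2, hzx]
      rw [smul_eq_C_mul, smul_eq_C_mul, smul_eq_C_mul]
      simp only [Nat.cast_add, Nat.cast_one, map_add, map_mul, map_one]
      ring

/-- For `A = k[x,y,z]` with `{x,y} = qxy`, `{y,z} = qyz`, `{z,x} = qxz`
and `g : x ↦ ζx, y ↦ y, z ↦ z` (`ζ` a primitive `n`-th root of unity, `n > 1`), the fixed
subring is `k[xⁿ,y,z]` with the stated bracket, and its modular derivation is nonzero,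
so it is not unimodular. -/
theorem fixed_ring_skew_three_not_unimodular
    {k : Type*} [Field k] [IsAlgClosed k] [CharZero k]
    (q : k) (hq : q ≠ 0) (n : ℕ) (hn : 1 < n) (ζ : k) (hζ : IsPrimitiveRoot ζ n)
    (P : PoissonBracket k (MvPolynomial (Fin 3) k))
    (hxy : P.br (X 0) (X 1) = q • (X 0 * X 1))
    (hyz : P.br (X 1) (X 2) = q • (X 1 * X 2))
    (hzx : P.br (X 2) (X 0) = q • (X 2 * X 0))
    (g : MvPolynomial (Fin 3) k ≃ₐ[k] MvPolynomial (Fin 3) k)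
    (hgP : ∀ a b, g (P.br a b) = P.br (g a) (g b))
    (hgx : g (X 0) = ζ • X 0) (hgy : g (X 1) = X 1) (hgz : g (X 2) = X 2) :
    {a : MvPolynomial (Fin 3) k | g a = a}
      = ↑(Algebra.adjoin k ({X 0 ^ n, X 1, X 2} : Set (MvPolynomial (Fin 3) k))) ∧
    P.br (X 0 ^ n) (X 1) = ((n : k) * q) • (X 0 ^ n * X 1) ∧
    P.br (X 1) (X 2) = q • (X 1 * X 2) ∧
    P.br (X 2) (X 0 ^ n) = ((n : k) * q) • (X 0 ^ n * X 2) ∧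
    -- The fixed subring, presented as the polynomial ring in three variables with the
    -- induced bracket, has nonzero modular derivation (hence is not unimodular).
    (∀ R : PoissonBracket k (MvPolynomial (Fin 3) k),
      R.br (X 0) (X 1) = ((n : k) * q) • (X 0 * X 1) →
      R.br (X 1) (X 2) = q • (X 1 * X 2) →
      R.br (X 2) (X 0) = ((n : k) * q) • (X 0 * X 2) →
      ∃ f : MvPolynomial (Fin 3) k,
        (∑ j : Fin 3, pderiv j (R.br f (X j))) ≠ 0) := by
  have hn0 : 0 < n := lt_trans one_pos hn
  obtain ⟨hbrxy, hbrzx⟩ := aux_br_pow q P hxy hzx n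
  refine ⟨?_, ?_, hyz, hbrzx, ?_⟩
  · ext a
    simp only [Set.mem_setOf_eq, SetLike.mem_coe]
    constructor
    · intro h
      have key : ∀ d ∈ a.support,
          (monomial d (coeff d a)) ∈
            Algebra.adjoin k ({X 0 ^ n, X 1, X 2} : Set (MvPolynomial (Fin 3) k)) := by
        intro d hd
        have hco : ζ ^ (d 0) * coeff d a = coeff d a := by
          rw [← aux_coeff_g ζ g hgx hgy hgz, h]
        have hcne : coeff d a ≠ 0 := MvPolynomial.mem_support_iff.mp hd
        have hz1 : ζ ^ (d 0) = 1 := by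
          exact mul_right_cancel₀ hcne (hco.trans (one_mul _).symm)
        have hdvd : n ∣ d 0 := (IsPrimitiveRoot.pow_eq_one_iff_dvd hζ (d 0)).mp hz1
        obtain ⟨t, ht⟩ := hdvd
        rw [aux_monomial_fin3]
        refine mul_mem (mul_mem (mul_mem ?_ ?_) ?_) ?_
        · rw [← algebraMap_eq]; exact Subalgebra.algebraMap_mem _ _
        · rw [ht, pow_mul]
          exact pow_mem (Algebra.subset_adjoin (by simp)) t
        · exact pow_mem (Algebra.subset_adjoin (by simp)) _
        · exact pow_mem (Algebra.subset_adjoin (by simp)) _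
      rw [← support_sum_monomial_coeff a]
      exact Subalgebra.sum_mem _ key
    · intro ha
      induction ha using Algebra.adjoin_induction with
      | mem x hx =>
        rcases hx with h | h | h
        · subst h
          rw [map_pow, hgx, smul_pow, hζ.pow_eq_one, one_smul]
        · subst h; exact hgy
        · subst h; exact hgz
      | algebraMap r => exact g.commutes r
      | add x y _ _ hx hy => rw [map_add, hx, hy]
      | mul x y _ _ hx hy => rw [map_mul, hx, hy]
  · rw [P.antisymm, hbrxy, neg_neg]
  · intro R h1 h2 h3
    refine ⟨X 1, ?_⟩
    have hb0 : R.br (X 1) (X 0) = -(((n : k) * q) • (X 0 * X 1)) := by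
      rw [R.antisymm, h1]
    have hb1 : R.br (X 1) (X 1) = 0 := aux_br_self R (X 1)
    rw [Fin.sum_univ_three, hb0, hb1, h2, map_zero]
    have hcalc : (pderiv (0 : Fin 3)) (-(((n : k) * q) • (X 0 * X 1))) + 0 +
        (pderiv (2 : Fin 3)) (q • ((X 1 : MvPolynomial (Fin 3) k) * X 2))
        = (q - (n : k) * q) • (X 1 : MvPolynomial (Fin 3) k) := by
      simp [smul_eq_C_mul]
      ring
    rw [hcalc]
    refine smul_ne_zero ?_ (X_ne_zero 1)
    have hne1 : (n : k) ≠ 1 := by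
      intro hc
      exact (Nat.lt_irrefl 1) (by
        have : n = 1 := Nat.cast_injective (by rw [hc, Nat.cast_one])
        omega)
    intro hc
    apply hne1
    have : q * (1 - (n : k)) = 0 := by rw [← hc]; ring
    rcases mul_eq_zero.mp this with h | h
    · exact absurd h hq
    · rw [sub_eq_zero] at h
      exact h.symm
end

section
/- Let A = k[x, y, z] with Poisson bracket {x,y} = q(xy − z²), {y,z} = q(yz − x²), {z,x} = q(xz − y²), for q ∈ k^×, and let γ be a primitive third root of unity. Set u = x + y + z, v = x + γy + γ²z, w = x + γ²y + γz, and ρ = γq(1 − γ). Then {u, v} = ρ·uv, {v, w} = ρ·vw, and {w, u} = ρ·uw; in particular, A is Poisson isomorphic to a skew-symmetric Poisson algebra. -/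
open MvPolynomial

/-- Transport of a Poisson bracket along an algebra isomorphism. -/
def PoissonBracket.transport {k A B : Type*} [CommRing k] [CommRing A] [CommRing B]
    [Algebra k A] [Algebra k B] (P : PoissonBracket k A) (e : A ≃ₐ[k] B) :
    PoissonBracket k B where
  br s t := e (P.br (e.symm s) (e.symm t))
  add_left a b c := by simp [map_add, P.add_left]
  smul_left r a b := by
    show e (P.br (e.symm (r • a)) (e.symm b)) = r • e (P.br (e.symm a) (e.symm b))
    rw [map_smul, P.smul_left, map_smul]
  antisymm a b := by
    show e (P.br (e.symm a) (e.symm b)) = -e (P.br (e.symm b) (e.symm a))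
    rw [P.antisymm, map_neg]
  leibniz a b c := by
    simp only [map_mul, P.leibniz, map_add, AlgEquiv.apply_symm_apply]
  jacobi a b c := by
    simp only [AlgEquiv.symm_apply_apply]
    rw [P.jacobi, map_add]

set_option maxHeartbeats 1600000 in
/-- For `A = k[x,y,z]` with `{x,y} = q(xy−z²)`, `{y,z} = q(yz−x²)`,
`{z,x} = q(xz−y²)` and `γ` a primitive cube root of unity, the elements
`u = x+y+z`, `v = x+γy+γ²z`, `w = x+γ²y+γz` satisfy `{u,v} = ρuv`, `{v,w} = ρvw`,
`{w,u} = ρuw` with `ρ = γq(1−γ)`; in particular `A` is Poisson isomorphic to a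
skew-symmetric Poisson algebra. -/
theorem jacobian_diagonalization_skew
    {k : Type*} [Field k] [IsAlgClosed k] [CharZero k]
    (q : k) (hq : q ≠ 0) (γ : k) (hγ : IsPrimitiveRoot γ 3)
    (P : PoissonBracket k (MvPolynomial (Fin 3) k))
    (hxy : P.br (X 0) (X 1) = q • (X 0 * X 1 - X 2 ^ 2))
    (hyz : P.br (X 1) (X 2) = q • (X 1 * X 2 - X 0 ^ 2))
    (hzx : P.br (X 2) (X 0) = q • (X 2 * X 0 - X 1 ^ 2)) :
    ∀ (u v w : MvPolynomial (Fin 3) k) (ρ : k),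
      u = X 0 + X 1 + X 2 →
      v = X 0 + γ • X 1 + (γ ^ 2) • X 2 →
      w = X 0 + (γ ^ 2) • X 1 + γ • X 2 →
      ρ = γ * q * (1 - γ) →
      P.br u v = ρ • (u * v) ∧ P.br v w = ρ • (v * w) ∧ P.br w u = ρ • (u * w) ∧
      ∃ (φ : MvPolynomial (Fin 3) k ≃ₐ[k] MvPolynomial (Fin 3) k)
        (Q : PoissonBracket k (MvPolynomial (Fin 3) k)),
        (∀ a b, φ (P.br a b) = Q.br (φ a) (φ b)) ∧
        Q.br (X 0) (X 1) = ρ • (X 0 * X 1) ∧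
        Q.br (X 1) (X 2) = ρ • (X 1 * X 2) ∧
        Q.br (X 2) (X 0) = ρ • (X 2 * X 0) := by
  intro u v w ρ hu hv hw hρ
  subst hu hv hw hρ
  -- basic facts about γ
  have hγ3 : γ ^ 3 = 1 := hγ.pow_eq_one
  have hγne : γ ≠ 1 := hγ.ne_one (by norm_num)
  have hrel : γ ^ 2 + γ + 1 = 0 := by
    have h0 : (γ - 1) * (γ ^ 2 + γ + 1) = 0 := by linear_combination hγ3
    rcases mul_eq_zero.mp h0 with h | h
    · exact absurd (sub_eq_zero.mp h) hγne
    · exact h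
  have hC : (C γ : MvPolynomial (Fin 3) k) ^ 2 + C γ + 1 = 0 := by
    have := congrArg (C : k →+* MvPolynomial (Fin 3) k) hrel
    simpa using this
  -- bilinearity consequences
  have hself : ∀ a, P.br a a = 0 := by
    intro a
    have h := P.antisymm a a
    have h2 : (2 : k) • P.br a a = 0 := by
      rw [two_smul]
      nth_rewrite 1 [h]
      exact neg_add_cancel _
    exact (smul_eq_zero.mp h2).resolve_left two_ne_zero
  have haddr : ∀ a b c, P.br a (b + c) = P.br a b + P.br a c := by
    intro a b c
    rw [P.antisymm, P.add_left, neg_add, ← P.antisymm, ← P.antisymm]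
  have hsmulr : ∀ (r : k) a b, P.br a (r • b) = r • P.br a b := by
    intro r a b
    rw [P.antisymm, P.smul_left, ← smul_neg, ← P.antisymm]
  have h10 : P.br (X 1) (X 0) = -(q • (X 0 * X 1 - X 2 ^ 2)) := by rw [P.antisymm, hxy]
  have h21 : P.br (X 2) (X 1) = -(q • (X 1 * X 2 - X 0 ^ 2)) := by rw [P.antisymm, hyz]
  have h02 : P.br (X 0) (X 2) = -(q • (X 2 * X 0 - X 1 ^ 2)) := by rw [P.antisymm, hzx]
  -- the three bracket computations
  have key1 : P.br (X 0 + X 1 + X 2) (X 0 + γ • X 1 + γ ^ 2 • X 2)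
      = (γ * q * (1 - γ)) • ((X 0 + X 1 + X 2) * (X 0 + γ • X 1 + γ ^ 2 • X 2)) := by
    simp only [P.add_left, haddr, P.smul_left, hsmulr, hself, hxy, hyz, hzx, h10, h21, h02,
      smul_zero, add_zero, zero_add]
    simp only [smul_eq_C_mul, map_mul, map_sub, map_one, map_pow]
    linear_combination (C q * X 2 ^ 2 + (-1 : MvPolynomial (Fin 3) k) * C q * X 1 ^ 2 + C q * X 0 * X 2 + (-1 : MvPolynomial (Fin 3) k) * C q * X 0 * X 1 + (-2 : MvPolynomial (Fin 3) k) * C γ * C q * X 2 ^ 2 + (-1 : MvPolynomial (Fin 3) k) * C γ * C q * X 1 * X 2 + C γ * C q * X 1 ^ 2 + (-2 : MvPolynomial (Fin 3) k) * C γ * C q * X 0 * X 2 + C γ * C q * X 0 * X 1 + C γ ^ 2 * C q * X 2 ^ 2 + C γ ^ 2 * C q * X 1 * X 2 + C γ ^ 2 * C q * X 0 * X 2) * hC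
  have key2 : P.br (X 0 + γ • X 1 + γ ^ 2 • X 2) (X 0 + γ ^ 2 • X 1 + γ • X 2)
      = (γ * q * (1 - γ)) • ((X 0 + γ • X 1 + γ ^ 2 • X 2) * (X 0 + γ ^ 2 • X 1 + γ • X 2)) := by
    simp only [P.add_left, haddr, P.smul_left, hsmulr, hself, hxy, hyz, hzx, h10, h21, h02,
      smul_zero, add_zero, zero_add]
    simp only [smul_eq_C_mul, map_mul, map_sub, map_one, map_pow]
    linear_combination (C γ * C q * X 2 ^ 2 + C γ * C q * X 1 ^ 2 + (-1 : MvPolynomial (Fin 3) k) * C γ * C q * X 0 * X 2 + (-1 : MvPolynomial (Fin 3) k) * C γ * C q * X 0 * X 1 + (-1 : MvPolynomial (Fin 3) k) * C γ * C q * X 0 ^ 2 + (-2 : MvPolynomial (Fin 3) k) * C γ ^ 2 * C q * X 2 ^ 2 + C γ ^ 2 * C q * X 1 * X 2 + (-2 : MvPolynomial (Fin 3) k) * C γ ^ 2 * C q * X 1 ^ 2 + C γ ^ 2 * C q * X 0 * X 2 + C γ ^ 2 * C q * X 0 * X 1 + C γ ^ 2 * C q * X 0 ^ 2 + C γ ^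 3 * C q * X 2 ^ 2 + (-2 : MvPolynomial (Fin 3) k) * C γ ^ 3 * C q * X 1 * X 2 + C γ ^ 3 * C q * X 1 ^ 2 + C γ ^ 4 * C q * X 1 * X 2) * hC
  have key3 : P.br (X 0 + γ ^ 2 • X 1 + γ • X 2) (X 0 + X 1 + X 2)
      = (γ * q * (1 - γ)) • ((X 0 + X 1 + X 2) * (X 0 + γ ^ 2 • X 1 + γ • X 2)) := by
    simp only [P.add_left, haddr, P.smul_left, hsmulr, hself, hxy, hyz, hzx, h10, h21, h02,
      smul_zero, add_zero, zero_add]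
    simp only [smul_eq_C_mul, map_mul, map_sub, map_one, map_pow]
    linear_combination ((-1 : MvPolynomial (Fin 3) k) * C q * X 2 ^ 2 + C q * X 1 ^ 2 + (-1 : MvPolynomial (Fin 3) k) * C q * X 0 * X 2 + C q * X 0 * X 1 + C γ * C q * X 2 ^ 2 + (-1 : MvPolynomial (Fin 3) k) * C γ * C q * X 1 * X 2 + (-2 : MvPolynomial (Fin 3) k) * C γ * C q * X 1 ^ 2 + C γ * C q * X 0 * X 2 + (-2 : MvPolynomial (Fin 3) k) * C γ * C q * X 0 * X 1 + C γ ^ 2 * C q * X 1 * X 2 + C γ ^ 2 * C q * X 1 ^ 2 + C γ ^ 2 * C q * X 0 * X 1) * hC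
  refine ⟨key1, key2, key3, ?_⟩
  -- the change of variables
  have h3 : (3 : k) ≠ 0 := three_ne_zero
  set t : k := (3 : k)⁻¹ with ht
  have h3t : (3 : k) * t = 1 := mul_inv_cancel₀ h3
  have hCt : (3 : MvPolynomial (Fin 3) k) * C t = 1 := by
    have := congrArg (C : k →+* MvPolynomial (Fin 3) k) h3t
    rw [map_mul, map_one, map_ofNat C 3] at this; exact this
  set F : MvPolynomial (Fin 3) k →ₐ[k] MvPolynomial (Fin 3) k :=
    aeval ![X 0 + X 1 + X 2, X 0 + γ • X 1 + γ ^ 2 • X 2, X 0 + γ ^ 2 • X 1 + γ • X 2] with hF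
  set G : MvPolynomial (Fin 3) k →ₐ[k] MvPolynomial (Fin 3) k :=
    aeval ![t • (X 0 + X 1 + X 2), t • (X 0 + γ ^ 2 • X 1 + γ • X 2),
      t • (X 0 + γ • X 1 + γ ^ 2 • X 2)] with hG
  have hGF : G.comp F = AlgHom.id k _ := by
    have c0 : G (F (X 0)) = X 0 := by
      rw [hF, hG]
      simp only [aeval_X, Matrix.cons_val_zero, Matrix.cons_val_one, Matrix.head_cons,
        Matrix.cons_val_two, Matrix.tail_cons, map_add, map_smul]
      simp only [smul_eq_C_mul, smul_add, map_mul, map_add, map_pow]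
      linear_combination (X 2 * C t + X 1 * C t) * hC + X 0 * hCt
    have c1 : G (F (X 1)) = X 1 := by
      rw [hF, hG]
      simp only [aeval_X, Matrix.cons_val_zero, Matrix.cons_val_one, Matrix.head_cons,
        Matrix.cons_val_two, Matrix.tail_cons, map_add, map_smul]
      simp only [smul_eq_C_mul, smul_add, map_mul, map_add, map_pow]
      linear_combination (X 2 * C t + (-2 : MvPolynomial (Fin 3) k) * X 1 * C t + X 0 * C t + (-1 : MvPolynomial (Fin 3) k) * C γ * X 2 * C t + (2 : MvPolynomial (Fin 3) k) * C γ * X 1 * C t + C γ ^ 2 * X 2 * C t) * hC + X 1 * hCt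
    have c2 : G (F (X 2)) = X 2 := by
      rw [hF, hG]
      simp only [aeval_X, Matrix.cons_val_zero, Matrix.cons_val_one, Matrix.head_cons,
        Matrix.cons_val_two, Matrix.tail_cons, map_add, map_smul]
      simp only [smul_eq_C_mul, smul_add, map_mul, map_add, map_pow]
      linear_combination ((-2 : MvPolynomial (Fin 3) k) * X 2 * C t + X 1 * C t + X 0 * C t + (2 : MvPolynomial (Fin 3) k) * C γ * X 2 * C t + (-1 : MvPolynomial (Fin 3) k) * C γ * X 1 * C t + C γ ^ 2 * X 1 * C t) * hC + X 2 * hCt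
    apply MvPolynomial.algHom_ext
    intro i
    fin_cases i
    · exact c0
    · exact c1
    · exact c2
  have hFG : F.comp G = AlgHom.id k _ := by
    have c0 : F (G (X 0)) = X 0 := by
      rw [hF, hG]
      simp only [aeval_X, Matrix.cons_val_zero, Matrix.cons_val_one, Matrix.head_cons,
        Matrix.cons_val_two, Matrix.tail_cons, map_add, map_smul]
      simp only [smul_eq_C_mul, smul_add, map_mul, map_add, map_pow]
      linear_combination (X 2 * C t + X 1 * C t) * hC + X 0 * hCt
    have c1 : F (G (X 1)) = X 1 := by
      rw [hF, hG]
      simp only [aeval_X, Matrix.cons_val_zero, Matrix.cons_val_one, Matrix.head_cons,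
        Matrix.cons_val_two, Matrix.tail_cons, map_add, map_smul]
      simp only [smul_eq_C_mul, smul_add, map_mul, map_add, map_pow]
      linear_combination (X 2 * C t + (-2 : MvPolynomial (Fin 3) k) * X 1 * C t + X 0 * C t + (-1 : MvPolynomial (Fin 3) k) * C γ * X 2 * C t + (2 : MvPolynomial (Fin 3) k) * C γ * X 1 * C t + C γ ^ 2 * X 2 * C t) * hC + X 1 * hCt
    have c2 : F (G (X 2)) = X 2 := by
      rw [hF, hG]
      simp only [aeval_X, Matrix.cons_val_zero, Matrix.cons_val_one, Matrix.head_cons,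
        Matrix.cons_val_two, Matrix.tail_cons, map_add, map_smul]
      simp only [smul_eq_C_mul, smul_add, map_mul, map_add, map_pow]
      linear_combination ((-2 : MvPolynomial (Fin 3) k) * X 2 * C t + X 1 * C t + X 0 * C t + (2 : MvPolynomial (Fin 3) k) * C γ * X 2 * C t + (-1 : MvPolynomial (Fin 3) k) * C γ * X 1 * C t + C γ ^ 2 * X 1 * C t) * hC + X 2 * hCt
    apply MvPolynomial.algHom_ext
    intro i
    fin_cases i
    · exact c0
    · exact c1
    · exact c2
  set e : MvPolynomial (Fin 3) k ≃ₐ[k] MvPolynomial (Fin 3) k :=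
    AlgEquiv.ofAlgHom F G hFG hGF with he
  have hcoe : ∀ p, e p = F p := fun p => rfl
  have heu : e (X 0) = X 0 + X 1 + X 2 := by
    rw [hcoe, hF, aeval_X]; rfl
  have hev : e (X 1) = X 0 + γ • X 1 + γ ^ 2 • X 2 := by
    rw [hcoe, hF, aeval_X]; rfl
  have hew : e (X 2) = X 0 + γ ^ 2 • X 1 + γ • X 2 := by
    rw [hcoe, hF, aeval_X]; rfl
  refine ⟨e.symm, P.transport e.symm, ?_, ?_, ?_, ?_⟩
  · intro a b
    show e.symm (P.br a b) = e.symm (P.br (e.symm.symm (e.symm a)) (e.symm.symm (e.symm b)))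
    simp
  · show e.symm (P.br (e.symm.symm (X 0)) (e.symm.symm (X 1))) = _
    rw [AlgEquiv.symm_symm, heu, hev, key1, map_smul, map_mul, ← heu, ← hev,
      e.symm_apply_apply, e.symm_apply_apply]
  · show e.symm (P.br (e.symm.symm (X 1)) (e.symm.symm (X 2))) = _
    rw [AlgEquiv.symm_symm, hev, hew, key2, map_smul, map_mul, ← hev, ← hew,
      e.symm_apply_apply, e.symm_apply_apply]
  · show e.symm (P.br (e.symm.symm (X 2)) (e.symm.symm (X 0))) = _
    rw [AlgEquiv.symm_symm, hew, heu, key3, map_smul, map_mul, ← heu, ← hew,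
      e.symm_apply_apply, e.symm_apply_apply, mul_comm (X 0 : MvPolynomial (Fin 3) k) (X 2)]
end

section
/- Let O(M₂) = k[a, b, c, d] with Poisson bracket {a,b} = ab, {a,c} = ac, {a,d} = 2bc, {b,d} = bd, {c,d} = cd, {b,c} = 0. Then every degree-one Poisson normal element of O(M₂) is a scalar multiple of an element of the form μb + μ'c with μ, μ' ∈ k. -/
open MvPolynomial


lemma deg_one_single' (m : Fin 4 →₀ ℕ) (h : m.degree = 1) : ∃ i, m = Finsupp.single i 1 := by
  have hs : m.degree = ∑ i : Fin 4, m i := by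
    rw [Finsupp.degree]
    exact Finset.sum_subset (Finset.subset_univ _) (fun i _ hi => Finsupp.notMem_support_iff.mp hi)
  rw [hs, Fin.sum_univ_four] at h
  have h0 : m 0 = 1 ∧ m 1 = 0 ∧ m 2 = 0 ∧ m 3 = 0 ∨ m 1 = 1 ∧ m 0 = 0 ∧ m 2 = 0 ∧ m 3 = 0
      ∨ m 2 = 1 ∧ m 0 = 0 ∧ m 1 = 0 ∧ m 3 = 0 ∨ m 3 = 1 ∧ m 0 = 0 ∧ m 1 = 0 ∧ m 2 = 0 := by omega
  rcases h0 with ⟨a,b,c,d⟩|⟨a,b,c,d⟩|⟨a,b,c,d⟩|⟨a,b,c,d⟩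
  · exact ⟨0, Finsupp.ext fun j => by fin_cases j <;> simp_all [Finsupp.single_apply]⟩
  · exact ⟨1, Finsupp.ext fun j => by fin_cases j <;> simp_all [Finsupp.single_apply]⟩
  · exact ⟨2, Finsupp.ext fun j => by fin_cases j <;> simp_all [Finsupp.single_apply]⟩
  · exact ⟨3, Finsupp.ext fun j => by fin_cases j <;> simp_all [Finsupp.single_apply]⟩

lemma hom_one_decomp' {k : Type*} [Field k] (u : MvPolynomial (Fin 4) k) (hu : u.IsHomogeneous 1) :
    u = u.coeff (Finsupp.single 0 1) • X 0 + u.coeff (Finsupp.single 1 1) • X 1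
      + u.coeff (Finsupp.single 2 1) • X 2 + u.coeff (Finsupp.single 3 1) • X 3 := by
  ext m
  by_cases h : m.degree = 1
  · obtain ⟨i, rfl⟩ := deg_one_single' m h
    fin_cases i <;>
      simp [coeff_add, coeff_smul, coeff_X', Finsupp.single_eq_single_iff]
  · rw [hu.coeff_eq_zero h]
    have : ∀ i : Fin 4, Finsupp.single i 1 ≠ m := by
      intro i hi
      apply h; rw [← hi]; simp [Finsupp.degree_apply, Finsupp.support_single_ne_zero]
    simp [coeff_add, coeff_smul, coeff_X', this]

/-- In `O(M₂) = k[a,b,c,d]` (`a = X 0, b = X 1, c = X 2, d = X 3`) with the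
semiclassical-limit Poisson bracket, every degree-one Poisson normal element has the form
`μb + μ'c`. -/
theorem OM2_degree_one_normal_elements
    {k : Type*} [Field k] [IsAlgClosed k] [CharZero k]
    (P : PoissonBracket k (MvPolynomial (Fin 4) k))
    (hab : P.br (X 0) (X 1) = X 0 * X 1)
    (hac : P.br (X 0) (X 2) = X 0 * X 2)
    (had : P.br (X 0) (X 3) = 2 * (X 1 * X 2))
    (hbd : P.br (X 1) (X 3) = X 1 * X 3)
    (hcd : P.br (X 2) (X 3) = X 2 * X 3)
    (hbc : P.br (X 1) (X 2) = 0) :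
    ∀ u : MvPolynomial (Fin 4) k, u.IsHomogeneous 1 →
      (∀ a, ∃ c, P.br u a = u * c) →
      ∃ μ μ' : k, u = μ • X 1 + μ' • X 2 := by
  intro u hu hn
  set α := u.coeff (Finsupp.single 0 1) with hα
  set β := u.coeff (Finsupp.single 1 1) with hβ
  set γ := u.coeff (Finsupp.single 2 1) with hγ
  set δ := u.coeff (Finsupp.single 3 1) with hδ
  have hdec : u = α • X 0 + β • X 1 + γ • X 2 + δ • X 3 := hom_one_decomp' u hu
  have hxx : ∀ x : MvPolynomial (Fin 4) k, P.br x x = 0 := by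
    intro x
    have h := P.antisymm x x
    have h2 : (2 : k) • P.br x x = 0 := by rw [two_smul]; nth_rewrite 1 [h]; exact neg_add_cancel _
    rcases smul_eq_zero.mp h2 with h' | h'
    · exact absurd h' two_ne_zero
    · exact h'
  -- bracket with X 3
  have hbr3 : P.br u (X 3) = α • (2 * (X 1 * X 2)) + β • (X 1 * X 3) + γ • (X 2 * X 3) := by
    rw [hdec, P.add_left, P.add_left, P.add_left, P.smul_left, P.smul_left, P.smul_left,
      P.smul_left, had, hbd, hcd, hxx]
    rw [smul_zero, add_zero]
  -- bracket with X 0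
  have hbr0 : P.br u (X 0) =
      -(β • (X 0 * X 1) + γ • (X 0 * X 2) + δ • (2 * (X 1 * X 2))) := by
    have h1 : P.br (X 1) (X 0) = -(X 0 * X 1) := by rw [P.antisymm, hab]
    have h2 : P.br (X 2) (X 0) = -(X 0 * X 2) := by rw [P.antisymm, hac]
    have h3 : P.br (X 3) (X 0) = -(2 * (X 1 * X 2)) := by rw [P.antisymm, had]
    rw [hdec, P.add_left, P.add_left, P.add_left, P.smul_left, P.smul_left, P.smul_left,
      P.smul_left, hxx, h1, h2, h3]
    simp only [smul_zero, smul_neg, zero_add]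
    abel
  -- α = 0
  have hα0 : α = 0 := by
    by_contra hne
    obtain ⟨c3, hc3⟩ := hn (X 3)
    set ψ : MvPolynomial (Fin 4) k →ₐ[k] MvPolynomial (Fin 4) k :=
      aeval ![-(α⁻¹ • (β • X 1 + γ • X 2 + δ • X 3)), X 1, X 2, X 3] with hψ
    have hψu : ψ u = 0 := by
      rw [hdec]
      simp only [map_add, map_smul, hψ, aeval_X, Matrix.cons_val_zero, Matrix.cons_val_one,
        Matrix.head_cons, Matrix.cons_val_two, Matrix.tail_cons, Matrix.cons_val_three]
      rw [smul_neg, smul_smul, mul_inv_cancel₀ hne, one_smul]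
      abel
    have hq : α • (2 * (X 1 * X 2)) + β • (X 1 * X 3) + γ • (X 2 * X 3)
        = (0 : MvPolynomial (Fin 4) k) := by
      have := congrArg ψ hc3
      rw [map_mul, hψu, zero_mul, hbr3] at this
      rw [← this]
      simp only [map_add, map_smul, map_mul, map_ofNat, hψ, aeval_X, Matrix.cons_val_one, Matrix.cons_val_zero,
        Matrix.head_cons, Matrix.cons_val_two, Matrix.tail_cons, Matrix.cons_val_three]
    have := congrArg (aeval (![0, 1, 1, 0] : Fin 4 → k)) hq
    simp only [map_add, map_smul, map_mul, map_ofNat, map_zero, aeval_X, Matrix.cons_val_zero,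
      Matrix.cons_val_one, Matrix.head_cons, Matrix.cons_val_two, Matrix.tail_cons,
      Matrix.cons_val_three, smul_eq_mul] at this
    apply hne
    have h2 : (2 : k) * α = 0 := by linear_combination this
    rcases mul_eq_zero.mp h2 with h' | h'
    · exact absurd h' two_ne_zero
    · exact h'
  -- δ = 0
  have hδ0 : δ = 0 := by
    by_contra hne
    obtain ⟨c0, hc0⟩ := hn (X 0)
    set ψ : MvPolynomial (Fin 4) k →ₐ[k] MvPolynomial (Fin 4) k :=
      aeval ![X 0, X 1, X 2, -(δ⁻¹ • (β • X 1 + γ • X 2))] with hψ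
    have hψu : ψ u = 0 := by
      rw [hdec, hα0]
      simp only [map_add, map_smul, hψ, aeval_X, Matrix.cons_val_zero, Matrix.cons_val_one,
        Matrix.head_cons, Matrix.cons_val_two, Matrix.tail_cons, Matrix.cons_val_three]
      rw [smul_neg, smul_smul, mul_inv_cancel₀ hne, one_smul]
      rw [zero_smul]
      abel
    have hq : -(β • (X 0 * X 1) + γ • (X 0 * X 2) + δ • (2 * (X 1 * X 2)))
        = (0 : MvPolynomial (Fin 4) k) := by
      have := congrArg ψ hc0
      rw [map_mul, hψu, zero_mul, hbr0] at this
      rw [← this]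
      simp only [map_neg, map_add, map_smul, map_mul, map_ofNat, hψ, aeval_X,
        Matrix.cons_val_zero, Matrix.cons_val_one, Matrix.head_cons, Matrix.cons_val_two,
        Matrix.tail_cons, Matrix.cons_val_three]
    have := congrArg (aeval (![0, 1, 1, 0] : Fin 4 → k)) hq
    simp only [map_neg, map_add, map_smul, map_mul, map_ofNat, map_zero, aeval_X,
      Matrix.cons_val_zero, Matrix.cons_val_one, Matrix.head_cons, Matrix.cons_val_two,
      Matrix.tail_cons, Matrix.cons_val_three, smul_eq_mul] at this
    apply hne
    have h2 : (2 : k) * δ = 0 := by linear_combination -this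
    rcases mul_eq_zero.mp h2 with h' | h'
    · exact absurd h' two_ne_zero
    · exact h'
  refine ⟨β, γ, ?_⟩
  rw [hdec, hα0, hδ0, zero_smul, zero_smul, zero_add, add_zero]
end

section
/- Let H_n = k[x₁,...,xₙ, y₁,...,yₙ, z] be the homogenized n-th Weyl Poisson algebra with bracket {xᵢ, yⱼ} = δ_{ij}·z², {xᵢ, xⱼ} = {yᵢ, yⱼ} = 0, and {z, −} = 0. Then the Poisson center of H_n equals k[z]. -/
open MvPolynomial

lemma coeff_pderiv_aux {σ R : Type*} [CommRing R] [DecidableEq σ] (i : σ) (m : σ →₀ ℕ)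
    (f : MvPolynomial σ R) :
    coeff m (pderiv i f) = ((m i : ℕ) + 1 : ℕ) * coeff (m + Finsupp.single i 1) f := by
  induction f using MvPolynomial.induction_on' with
  | monomial s c =>
    rw [pderiv_monomial, coeff_monomial, coeff_monomial]
    by_cases hs : s = m + Finsupp.single i 1
    · subst hs
      have h1 : m + Finsupp.single i 1 - Finsupp.single i 1 = m := by
        ext j; simp [Finsupp.tsub_apply, Finsupp.single_apply]
      have h2 := Finsupp.add_apply m (Finsupp.single i 1) i
      rw [Finsupp.single_eq_same] at h2
      rw [if_pos h1, if_pos rfl, h2]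
      push_cast; ring
    · rw [if_neg hs]
      by_cases hsi : s i = 0
      · by_cases hsm : s - Finsupp.single i 1 = m
        · rw [if_pos hsm, hsi]; ring
        · rw [if_neg hsm]; ring
      · by_cases hsm : s - Finsupp.single i 1 = m
        · exfalso; apply hs
          have hle : Finsupp.single i 1 ≤ s :=
            Finsupp.single_le_iff.mpr (Nat.one_le_iff_ne_zero.mpr hsi)
          rw [← hsm, tsub_add_cancel_of_le hle]
        · rw [if_neg hsm]; ring
  | add p q hp hq => simp [hp, hq]; ring

lemma pderiv_ne_zero_of_mem_vars {σ R : Type*} [CommRing R] [CharZero R] [NoZeroDivisors R]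
    [DecidableEq σ] {i : σ} {f : MvPolynomial σ R} (h : i ∈ f.vars) : pderiv i f ≠ 0 := by
  obtain ⟨d, hd, hid⟩ := (mem_vars i).mp h
  rw [Finsupp.mem_support_iff] at hid
  rw [mem_support_iff] at hd
  intro hzero
  have key := coeff_pderiv_aux i (d - Finsupp.single i 1) f
  rw [hzero] at key
  have hle : Finsupp.single i 1 ≤ d :=
    Finsupp.single_le_iff.mpr (Nat.one_le_iff_ne_zero.mpr hid)
  rw [tsub_add_cancel_of_le hle] at key
  simp only [coeff_zero] at key
  rcases mul_eq_zero.mp key.symm with h' | h'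
  · exact Nat.succ_ne_zero _ (Nat.cast_eq_zero.mp h')
  · exact hd h'

/-- The Poisson center of the homogenized `n`-th Weyl Poisson algebra
`Hₙ = k[x₁,...,xₙ,y₁,...,yₙ,z]` (with `{xᵢ,yⱼ} = δ_{ij}z²` and all other brackets of
generators zero) equals `k[z]`. -/
theorem homogenized_weyl_poisson_center
    {k : Type*} [Field k] [IsAlgClosed k] [CharZero k] (n : ℕ)
    (P : PoissonBracket k (MvPolynomial ((Fin n ⊕ Fin n) ⊕ Unit) k))
    (hxy : ∀ i j : Fin n, P.br (X (Sum.inl (Sum.inl i))) (X (Sum.inl (Sum.inr j)))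
      = if i = j then (X (Sum.inr ())) ^ 2 else 0)
    (hxx : ∀ i j : Fin n, P.br (X (Sum.inl (Sum.inl i))) (X (Sum.inl (Sum.inl j))) = 0)
    (hyy : ∀ i j : Fin n, P.br (X (Sum.inl (Sum.inr i))) (X (Sum.inl (Sum.inr j))) = 0)
    (hz : ∀ a, P.br (X (Sum.inr ())) a = 0) :
    ∀ a : MvPolynomial ((Fin n ⊕ Fin n) ⊕ Unit) k,
      (∀ b, P.br a b = 0) ↔
        a ∈ Algebra.adjoin k ({X (Sum.inr ())} :
          Set (MvPolynomial ((Fin n ⊕ Fin n) ⊕ Unit) k)) := by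
  have hone : ∀ p, P.br p 1 = 0 := by
    intro p
    have h := P.leibniz p 1 1
    rw [mul_one, one_mul, mul_one] at h
    exact right_eq_add.mp h
  have hone' : ∀ p, P.br 1 p = 0 := by
    intro p; rw [P.antisymm, hone, neg_zero]
  have hadd_right : ∀ p b c, P.br p (b + c) = P.br p b + P.br p c := by
    intro p b c
    rw [P.antisymm, P.add_left, P.antisymm b, P.antisymm c]; ring
  have hsmul_right : ∀ (r : k) p b, P.br p (r • b) = r • P.br p b := by
    intro r p b
    rw [P.antisymm, P.smul_left, P.antisymm b, smul_neg, neg_neg]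
  let D : MvPolynomial ((Fin n ⊕ Fin n) ⊕ Unit) k →
      Derivation k (MvPolynomial ((Fin n ⊕ Fin n) ⊕ Unit) k)
        (MvPolynomial ((Fin n ⊕ Fin n) ⊕ Unit) k) := fun p =>
    { toFun := P.br p
      map_add' := hadd_right p
      map_smul' := fun r b => hsmul_right r p b
      map_one_eq_zero' := hone p
      leibniz' := fun b c => by
        simp only [smul_eq_mul]
        show P.br p (b * c) = b * P.br p c + c * P.br p b
        rw [P.leibniz p b c]; ring }
  have hD : ∀ p b, D p b = P.br p b := fun _ _ => rfl
  have hDx : ∀ i : Fin n,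
      D (X (Sum.inl (Sum.inl i))) = (X (Sum.inr ()) : MvPolynomial ((Fin n ⊕ Fin n) ⊕ Unit) k) ^ 2 • pderiv (Sum.inl (Sum.inr i)) := by
    intro i
    apply derivation_ext
    rintro ((j | j) | u)
    · rw [hD, hxx, Derivation.smul_apply,
        pderiv_X_of_ne (by simp : (Sum.inl (Sum.inl j) : (Fin n ⊕ Fin n) ⊕ Unit) ≠ Sum.inl (Sum.inr i)),
        smul_zero]
    · rw [hD, hxy, Derivation.smul_apply]
      by_cases hij : i = j
      · subst hij; rw [if_pos rfl, pderiv_X_self, smul_eq_mul, mul_one]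
      · rw [if_neg hij,
          pderiv_X_of_ne (by simpa using Ne.symm hij :
            (Sum.inl (Sum.inr j) : (Fin n ⊕ Fin n) ⊕ Unit) ≠ Sum.inl (Sum.inr i)), smul_zero]
    · cases u
      rw [hD, P.antisymm, hz, neg_zero, Derivation.smul_apply,
        pderiv_X_of_ne (by simp : (Sum.inr () : (Fin n ⊕ Fin n) ⊕ Unit) ≠ Sum.inl (Sum.inr i)),
        smul_zero]
  have hDy : ∀ i : Fin n,
      D (X (Sum.inl (Sum.inr i))) = -((X (Sum.inr ()) : MvPolynomial ((Fin n ⊕ Fin n) ⊕ Unit) k) ^ 2 • pderiv (Sum.inl (Sum.inl i))) := by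
    intro i
    apply derivation_ext
    rintro ((j | j) | u)
    · rw [hD, P.antisymm, hxy, Derivation.neg_apply, Derivation.smul_apply]
      by_cases hij : j = i
      · subst hij; rw [if_pos rfl, pderiv_X_self, smul_eq_mul, mul_one]
      · rw [if_neg hij,
          pderiv_X_of_ne (by simpa using hij :
            (Sum.inl (Sum.inl j) : (Fin n ⊕ Fin n) ⊕ Unit) ≠ Sum.inl (Sum.inl i)),
          smul_zero, neg_zero]
    · rw [hD, hyy, Derivation.neg_apply, Derivation.smul_apply,
        pderiv_X_of_ne (by simp : (Sum.inl (Sum.inr j) : (Fin n ⊕ Fin n) ⊕ Unit) ≠ Sum.inl (Sum.inl i)),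
        smul_zero, neg_zero]
    · cases u
      rw [hD, P.antisymm, hz, neg_zero, Derivation.neg_apply, Derivation.smul_apply,
        pderiv_X_of_ne (by simp : (Sum.inr () : (Fin n ⊕ Fin n) ⊕ Unit) ≠ Sum.inl (Sum.inl i)),
        smul_zero, neg_zero]
  have hz2 : ((X (Sum.inr ()) : MvPolynomial ((Fin n ⊕ Fin n) ⊕ Unit) k) ^ 2) ≠ 0 :=
    pow_ne_zero _ (X_ne_zero _)
  intro a
  constructor
  · intro ha
    have hpd : ∀ j : (Fin n ⊕ Fin n) ⊕ Unit, j ≠ Sum.inr () → pderiv j a = 0 := by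
      rintro ((i | i) | u) hj
      · have h1 : P.br (X (Sum.inl (Sum.inr i))) a = 0 := by
          rw [P.antisymm, ha, neg_zero]
        have h2 := DFunLike.congr_fun (hDy i) a
        rw [hD, h1, Derivation.neg_apply, Derivation.smul_apply, smul_eq_mul] at h2
        have h3 := neg_eq_zero.mp h2.symm
        exact (mul_eq_zero.mp h3).resolve_left hz2
      · have h1 : P.br (X (Sum.inl (Sum.inl i))) a = 0 := by
          rw [P.antisymm, ha, neg_zero]
        have h2 := DFunLike.congr_fun (hDx i) a
        rw [hD, h1, Derivation.smul_apply, smul_eq_mul] at h2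
        exact (mul_eq_zero.mp h2.symm).resolve_left hz2
      · exact absurd rfl hj
    have hsupp : a ∈ supported k ({Sum.inr ()} : Set ((Fin n ⊕ Fin n) ⊕ Unit)) := by
      rw [mem_supported]
      intro j hj
      simp only [Finset.coe_sort_coe, Set.mem_singleton_iff]
      by_contra hne
      exact pderiv_ne_zero_of_mem_vars (by simpa using hj) (hpd j hne)
    rw [supported] at hsupp
    rwa [Set.image_singleton] at hsupp
  · intro ha b
    induction ha using Algebra.adjoin_induction with
    | mem x hx =>
      rcases Set.mem_singleton_iff.mp hx with rfl
      exact hz b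
    | algebraMap r =>
      rw [Algebra.algebraMap_eq_smul_one, P.smul_left, hone' b, smul_zero]
    | add x y hx hy hx' hy' => rw [P.add_left, hx', hy', add_zero]
    | mul x y hx hy hx' hy' =>
      rw [P.antisymm, P.leibniz, P.antisymm b x, P.antisymm b y, hx', hy']
      ring
end

section
/- Let H_n be the homogenized n-th Weyl Poisson algebra. Then every degree-one Poisson normal element of H_n is a scalar multiple of z. -/
open MvPolynomial

/-- The bracket with a fixed right argument, as a `k`-linear map. -/
noncomputable def brL {k A : Type*} [CommRing k] [CommRing A] [Algebra k A]
    (P : PoissonBracket k A) (b : A) : A →ₗ[k] A where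
  toFun a := P.br a b
  map_add' x y := P.add_left x y b
  map_smul' r x := P.smul_left r x b

/-- A finitely supported function to `ℕ` of degree one is a single. -/
lemma degree_one_single {σ : Type*} (m : σ →₀ ℕ) (hm : m.degree = 1) :
    ∃ v, m = Finsupp.single v 1 := by
  classical
  have hne : m.support.Nonempty := by
    rcases Finset.eq_empty_or_nonempty m.support with h | h
    · exfalso
      have : m = 0 := by
        ext i
        by_contra hi
        exact (Finset.notMem_empty i) (h ▸ Finsupp.mem_support_iff.mpr hi)
      rw [this] at hm
      simp [Finsupp.degree] at hm
    · exact h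
  obtain ⟨v, hv⟩ := hne
  have hsum : m v + ∑ i ∈ m.support.erase v, m i = 1 := by
    rw [Finset.add_sum_erase _ _ hv]
    exact hm
  have hmv : m v ≠ 0 := Finsupp.mem_support_iff.mp hv
  have hmv1 : m v = 1 := by omega
  have hrest : ∑ i ∈ m.support.erase v, m i = 0 := by omega
  refine ⟨v, ?_⟩
  ext i
  rcases eq_or_ne i v with rfl | hiv
  · simp [hmv1]
  · rw [Finsupp.single_apply, if_neg (Ne.symm hiv)]
    by_contra hi
    have hi' : i ∈ m.support.erase v :=
      Finset.mem_erase.mpr ⟨hiv, Finsupp.mem_support_iff.mpr hi⟩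
    have := (Finset.sum_eq_zero_iff.mp hrest) i hi'
    exact hi this

/-- A homogeneous polynomial of degree one is a linear combination of the variables. -/
lemma homog_one_decomp {k σ : Type*} [CommRing k] [Fintype σ] [DecidableEq σ]
    (u : MvPolynomial σ k) (hu : u.IsHomogeneous 1) :
    u = ∑ v : σ, MvPolynomial.coeff (Finsupp.single v 1) u • X v := by
  classical
  ext m
  rw [MvPolynomial.coeff_sum]
  simp only [MvPolynomial.coeff_smul, MvPolynomial.coeff_X', smul_eq_mul, mul_ite, mul_one,
    mul_zero]
  by_cases hm : m.degree = 1
  · obtain ⟨v, rfl⟩ := degree_one_single m hm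
    rw [Finset.sum_eq_single v]
    · rw [if_pos rfl]
    · intro b _ hb
      rw [if_neg]
      intro h
      exact hb (Finsupp.single_left_injective one_ne_zero h)
    · intro h; exact absurd (Finset.mem_univ v) h
  · rw [hu.coeff_eq_zero hm, Finset.sum_eq_zero]
    intro v _
    rw [if_neg]
    intro h
    apply hm
    rw [← h, Finsupp.degree_single]

/-- `X (Sum.inr ())` is prime. -/
lemma prime_X_inr {R α : Type*} [CommRing R] [IsDomain R] :
    Prime (X (Sum.inr ()) : MvPolynomial (α ⊕ Unit) R) := by
  let e := (renameEquiv R (Equiv.optionEquivSumPUnit α).symm).trans (optionEquivLeft R α)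
  rw [← MulEquiv.prime_iff e.toMulEquiv, show ∀ x, e.toMulEquiv x = e x from fun _ => rfl]
  have he : e (X (Sum.inr ())) = Polynomial.X := by
    show (optionEquivLeft R α) ((renameEquiv R (Equiv.optionEquivSumPUnit α).symm)
      (X (Sum.inr ()))) = Polynomial.X
    rw [renameEquiv_apply, rename_X]
    have : (Equiv.optionEquivSumPUnit α).symm (Sum.inr ()) = none := rfl
    rw [this, optionEquivLeft_X_none]
  rw [he]
  exact Polynomial.prime_X

/-- Key divisibility step: if `u` is homogeneous of degree one and `C a * z ^ 2 = u * c`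
with `a ≠ 0`, then `z` divides `u`. -/
lemma key_dvd {k α : Type*} [Field k] {u c : MvPolynomial (α ⊕ Unit) k} {a : k}
    (hu : u.IsHomogeneous 1) (ha : a ≠ 0)
    (h : C a * (X (Sum.inr ()) : MvPolynomial (α ⊕ Unit) k) ^ 2 = u * c) :
    (X (Sum.inr ()) : MvPolynomial (α ⊕ Unit) k) ∣ u := by
  set z : MvPolynomial (α ⊕ Unit) k := X (Sum.inr ()) with hzdef
  have hp : Prime z := prime_X_inr
  have hzne : z ≠ 0 := by rw [hzdef]; exact MvPolynomial.X_ne_zero _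
  have hd1 : z ∣ u * c := ⟨C a * z, by linear_combination -h⟩
  rcases hp.dvd_mul.mp hd1 with h1 | h1
  · exact h1
  obtain ⟨c', rfl⟩ := h1
  have h2 : u * c' = C a * z := by
    have : z * (u * c') = z * (C a * z) := by linear_combination -h
    exact mul_left_cancel₀ hzne this
  have hd2 : z ∣ u * c' := ⟨C a, by linear_combination h2⟩
  rcases hp.dvd_mul.mp hd2 with h3 | h3
  · exact h3
  obtain ⟨c'', rfl⟩ := h3
  have h4 : u * c'' = C a := by
    have : z * (u * c'') = z * C a := by linear_combination h2
    exact mul_left_cancel₀ hzne this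
  exfalso
  have h5 : constantCoeff (u * c'') = a := by rw [h4, constantCoeff_C]
  have h6 : constantCoeff u = 0 := by
    show MvPolynomial.coeff 0 u = 0
    apply hu.coeff_eq_zero
    simp [Finsupp.degree]
  rw [map_mul, h6, zero_mul] at h5
  exact ha h5.symm

/-- Every degree-one Poisson normal element of the homogenized `n`-th Weyl
Poisson algebra `Hₙ` is a scalar multiple of `z`. -/
theorem homogenized_weyl_degree_one_normal
    {k : Type*} [Field k] [IsAlgClosed k] [CharZero k] (n : ℕ)
    (P : PoissonBracket k (MvPolynomial ((Fin n ⊕ Fin n) ⊕ Unit) k))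
    (hxy : ∀ i j : Fin n, P.br (X (Sum.inl (Sum.inl i))) (X (Sum.inl (Sum.inr j)))
      = if i = j then (X (Sum.inr ())) ^ 2 else 0)
    (hxx : ∀ i j : Fin n, P.br (X (Sum.inl (Sum.inl i))) (X (Sum.inl (Sum.inl j))) = 0)
    (hyy : ∀ i j : Fin n, P.br (X (Sum.inl (Sum.inr i))) (X (Sum.inl (Sum.inr j))) = 0)
    (hz : ∀ a, P.br (X (Sum.inr ())) a = 0) :
    ∀ u : MvPolynomial ((Fin n ⊕ Fin n) ⊕ Unit) k, u.IsHomogeneous 1 →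
      (∀ a, ∃ c, P.br u a = u * c) →
      ∃ γ : k, u = γ • X (Sum.inr ()) := by
  classical
  intro u hu hnorm
  set z : MvPolynomial ((Fin n ⊕ Fin n) ⊕ Unit) k := X (Sum.inr ()) with hzdef
  -- coefficients of u
  set a : (Fin n ⊕ Fin n) ⊕ Unit → k := fun v => MvPolynomial.coeff (Finsupp.single v 1) u with hadef
  have hdecomp : u = ∑ v : (Fin n ⊕ Fin n) ⊕ Unit, a v • X v := homog_one_decomp u hu
  -- bracket of u with any variable, via linearity
  have hbr : ∀ b, P.br u b = ∑ v : (Fin n ⊕ Fin n) ⊕ Unit, a v • P.br (X v) b := by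
    intro b
    have : P.br u b = brL P b u := rfl
    rw [this, hdecomp, map_sum]
    simp [brL]
  -- bracket with y_j picks out the x_j coefficient
  have hbry : ∀ j : Fin n, P.br u (X (Sum.inl (Sum.inr j))) = a (Sum.inl (Sum.inl j)) • z ^ 2 := by
    intro j
    rw [hbr]
    rw [Fintype.sum_sum_type, Fintype.sum_sum_type]
    have h1 : ∑ i : Fin n, a (Sum.inl (Sum.inl i)) •
        P.br (X (Sum.inl (Sum.inl i))) (X (Sum.inl (Sum.inr j)))
        = a (Sum.inl (Sum.inl j)) • z ^ 2 := by
      rw [Finset.sum_eq_single j]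
      · rw [hxy, if_pos rfl]
      · intro i _ hij; rw [hxy, if_neg hij, smul_zero]
      · intro h; exact absurd (Finset.mem_univ j) h
    have h2 : ∑ i : Fin n, a (Sum.inl (Sum.inr i)) •
        P.br (X (Sum.inl (Sum.inr i))) (X (Sum.inl (Sum.inr j))) = 0 := by
      apply Finset.sum_eq_zero; intro i _; rw [hyy, smul_zero]
    have h3 : ∑ x : Unit, a (Sum.inr x) • P.br (X (Sum.inr x)) (X (Sum.inl (Sum.inr j))) = 0 := by
      apply Finset.sum_eq_zero; intro i _
      cases i; rw [hz, smul_zero]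
    rw [h1, h2, h3, add_zero, add_zero]
  -- bracket with x_j picks out the y_j coefficient (up to sign)
  have hbrx : ∀ j : Fin n, P.br u (X (Sum.inl (Sum.inl j)))
      = a (Sum.inl (Sum.inr j)) • (-(z ^ 2)) := by
    intro j
    rw [hbr]
    rw [Fintype.sum_sum_type, Fintype.sum_sum_type]
    have h1 : ∑ i : Fin n, a (Sum.inl (Sum.inl i)) •
        P.br (X (Sum.inl (Sum.inl i))) (X (Sum.inl (Sum.inl j))) = 0 := by
      apply Finset.sum_eq_zero; intro i _; rw [hxx, smul_zero]
    have h2 : ∑ i : Fin n, a (Sum.inl (Sum.inr i)) •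
        P.br (X (Sum.inl (Sum.inr i))) (X (Sum.inl (Sum.inl j)))
        = a (Sum.inl (Sum.inr j)) • (-(z ^ 2)) := by
      rw [Finset.sum_eq_single j]
      · rw [P.antisymm, hxy, if_pos rfl]
      · intro i _ hij
        rw [P.antisymm, hxy, if_neg (fun h => hij h.symm), neg_zero, smul_zero]
      · intro h; exact absurd (Finset.mem_univ j) h
    have h3 : ∑ x : Unit, a (Sum.inr x) • P.br (X (Sum.inr x)) (X (Sum.inl (Sum.inl j))) = 0 := by
      apply Finset.sum_eq_zero; intro i _
      cases i; rw [hz, smul_zero]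
    rw [h1, h2, h3, zero_add, add_zero]
  -- x-coefficients vanish
  have hax : ∀ j : Fin n, a (Sum.inl (Sum.inl j)) = 0 := by
    intro j
    by_contra haj
    obtain ⟨c, hc⟩ := hnorm (X (Sum.inl (Sum.inr j)))
    rw [hbry j] at hc
    have hc' : C (a (Sum.inl (Sum.inl j))) * z ^ 2 = u * c := by
      rw [← hc, MvPolynomial.smul_eq_C_mul]
    have hdvd : z ∣ u := key_dvd hu haj hc'
    obtain ⟨d, hd⟩ := hdvd
    have : a (Sum.inl (Sum.inl j)) = 0 := by
      rw [hadef]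
      simp only
      rw [hd, hzdef, MvPolynomial.coeff_X_mul']
      rw [if_neg]
      simp [Finsupp.single_apply]
    exact haj this
  -- y-coefficients vanish
  have hay : ∀ j : Fin n, a (Sum.inl (Sum.inr j)) = 0 := by
    intro j
    by_contra haj
    obtain ⟨c, hc⟩ := hnorm (X (Sum.inl (Sum.inl j)))
    rw [hbrx j] at hc
    have hc' : C (a (Sum.inl (Sum.inr j))) * z ^ 2 = u * (-c) := by
      rw [mul_neg, ← hc, smul_neg, neg_neg, MvPolynomial.smul_eq_C_mul]
    have hdvd : z ∣ u := key_dvd hu haj hc'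
    obtain ⟨d, hd⟩ := hdvd
    have : a (Sum.inl (Sum.inr j)) = 0 := by
      rw [hadef]
      simp only
      rw [hd, hzdef, MvPolynomial.coeff_X_mul']
      rw [if_neg]
      simp [Finsupp.single_apply]
    exact haj this
  -- conclude
  refine ⟨a (Sum.inr ()), ?_⟩
  rw [hdecomp, Fintype.sum_sum_type, Fintype.sum_sum_type]
  have h1 : ∑ i : Fin n, a (Sum.inl (Sum.inl i)) • (X (Sum.inl (Sum.inl i)) : MvPolynomial ((Fin n ⊕ Fin n) ⊕ Unit) k) = 0 := by
    apply Finset.sum_eq_zero; intro i _; rw [hax, zero_smul]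
  have h2 : ∑ i : Fin n, a (Sum.inl (Sum.inr i)) • (X (Sum.inl (Sum.inr i)) : MvPolynomial ((Fin n ⊕ Fin n) ⊕ Unit) k) = 0 := by
    apply Finset.sum_eq_zero; intro i _; rw [hay, zero_smul]
  rw [h1, h2, zero_add, zero_add]
  simp
  rfl
end

section
/- Let g be a finite-dimensional Lie algebra over k with no 1-dimensional Lie ideal, and let PH(g) = k[x₁,...,xₙ, z] be the homogenized Kostant-Kirillov Poisson algebra with bracket {xᵢ, xⱼ} = [xᵢ, xⱼ]·z and {xᵢ, z} = 0. Then, up to scalar multiple, z is the only nonzero Poisson normal element of PH(g) of degree one. -/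
open MvPolynomial

lemma aux_sum_lie {L : Type*} [LieRing L] {ι : Type*} (s : Finset ι)
    (f : ι → L) (y : L) : ⁅∑ i ∈ s, f i, y⁆ = ∑ i ∈ s, ⁅f i, y⁆ :=
  map_sum (⟨⟨fun x => ⁅x, y⁆, zero_lie y⟩, fun a b => add_lie a b y⟩ : L →+ L) f s

lemma aux_degree_eq_one {σ : Type*} {d : σ →₀ ℕ} (hd : d.degree = 1) :
    ∃ s, d = Finsupp.single s 1 := by
  classical
  have hd0 : d ≠ 0 := by
    intro h
    rw [h, map_zero] at hd
    exact one_ne_zero hd.symm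
  obtain ⟨s, hs⟩ := Finsupp.support_nonempty_iff.mpr hd0
  refine ⟨s, ?_⟩
  have hsum : ∑ a ∈ d.support, d a = 1 := hd
  have hds : d s ≤ 1 := hsum ▸ Finset.single_le_sum (fun a _ => Nat.zero_le _) hs
  have hds1 : d s = 1 :=
    le_antisymm hds (Nat.one_le_iff_ne_zero.mpr (Finsupp.mem_support_iff.mp hs))
  have h2 : d s + ∑ a ∈ d.support.erase s, d a = ∑ a ∈ d.support, d a :=
    Finset.add_sum_erase _ d hs
  have hrest : ∑ a ∈ d.support.erase s, d a = 0 := by omega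
  have hsub : d.support ⊆ {s} := by
    intro a ha
    by_contra hne
    have hne' : a ≠ s := by simpa using hne
    have ha' : a ∈ d.support.erase s := Finset.mem_erase.mpr ⟨hne', ha⟩
    exact Finsupp.mem_support_iff.mp ha ((Finset.sum_eq_zero_iff.mp hrest) a ha')
  have := Finsupp.support_subset_singleton.mp hsub
  rw [this, hds1]

lemma aux_deg1_decomp {k σ : Type*} [CommSemiring k] [Fintype σ]
    {u : MvPolynomial σ k} (hu : u.IsHomogeneous 1) :
    u = ∑ s : σ, (coeff (Finsupp.single s 1) u) • X s := by
  classical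
  apply MvPolynomial.ext
  intro d
  rw [coeff_sum]
  by_cases hd : d.degree = 1
  · obtain ⟨s₀, rfl⟩ := aux_degree_eq_one hd
    rw [Finset.sum_eq_single s₀]
    · simp [coeff_smul]
    · intro s _ hne
      rw [coeff_smul, coeff_X', if_neg, smul_zero]
      rw [Finsupp.single_left_inj one_ne_zero]
      exact hne
    · simp
  · rw [hu.coeff_eq_zero hd]
    refine (Finset.sum_eq_zero fun s _ => ?_).symm
    rw [coeff_smul, coeff_X', if_neg, smul_zero]
    intro h
    apply hd
    rw [← h]
    simp [Finsupp.degree_apply, Finsupp.support_single_ne_zero _ (one_ne_zero : (1:ℕ) ≠ 0)]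

lemma aux_coeff_sum {k : Type*} [CommSemiring k] {n : ℕ} (f : Fin n → k)
    (s₀ : Fin n ⊕ Unit) :
    coeff (Finsupp.single s₀ 1)
      (∑ i : Fin n, f i • X (Sum.inl i) : MvPolynomial (Fin n ⊕ Unit) k)
        = Sum.elim f 0 s₀ := by
  classical
  rw [coeff_sum]
  simp only [coeff_smul, coeff_X', smul_eq_mul, mul_ite, mul_one, mul_zero,
    Finsupp.single_left_inj (one_ne_zero : (1:ℕ) ≠ 0)]
  cases s₀ with
  | inl t =>
    simp only [Sum.inl.injEq, Sum.elim_inl]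
    rw [Finset.sum_ite_eq' Finset.univ t f]
    simp
  | inr t =>
    simp

/-- Let `L` be a finite-dimensional Lie algebra with no 1-dimensional Lie
ideal and `PH(L) = k[x₁,...,xₙ,z]` the homogenized Kostant-Kirillov Poisson algebra, with
`{xᵢ,xⱼ} = [xᵢ,xⱼ]z` and `{xᵢ,z} = 0`. Then, up to scalar, `z` is the only nonzero
degree-one Poisson normal element of `PH(L)`. -/
theorem homogenized_kostant_kirillov_normal_elements
    {k : Type*} [Field k] [IsAlgClosed k] [CharZero k]
    {L : Type*} [LieRing L] [LieAlgebra k L] [Module.Finite k L]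
    (hL : ¬∃ b : L, b ≠ 0 ∧ ∀ x : L, ∃ c : k, ⁅x, b⁆ = c • b)
    (n : ℕ) (b : Module.Basis (Fin n) k L)
    (P : PoissonBracket k (MvPolynomial (Fin n ⊕ Unit) k))
    (hbr : ∀ i j : Fin n,
      P.br (X (Sum.inl i)) (X (Sum.inl j))
        = (∑ t : Fin n, (b.repr ⁅b i, b j⁆ t) • (X (Sum.inl t) :
            MvPolynomial (Fin n ⊕ Unit) k)) * X (Sum.inr ()))
    (hz : ∀ a, P.br (X (Sum.inr ())) a = 0) :
    ∀ u : MvPolynomial (Fin n ⊕ Unit) k, u.IsHomogeneous 1 →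
      (∀ a, ∃ c, P.br u a = u * c) → u ≠ 0 →
      ∃ γ : k, γ ≠ 0 ∧ u = γ • X (Sum.inr ()) := by
  classical
  intro u hu hnorm hu0
  set z : MvPolynomial (Fin n ⊕ Unit) k := X (Sum.inr ()) with hzdef
  set α : Fin n → k := fun i => coeff (Finsupp.single (Sum.inl i) 1) u with hα
  set β : k := coeff (Finsupp.single (Sum.inr ()) 1) u with hβ
  have hdec : u = (∑ i : Fin n, α i • X (Sum.inl i)) + β • z := by
    conv_lhs => rw [aux_deg1_decomp hu]
    rw [Fintype.sum_sum_type]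
    simp [hα, hβ, hzdef]
  -- the bracket, as a linear map in its first argument
  let brL : MvPolynomial (Fin n ⊕ Unit) k →
      MvPolynomial (Fin n ⊕ Unit) k →ₗ[k] MvPolynomial (Fin n ⊕ Unit) k :=
    fun a =>
      { toFun := fun x => P.br x a
        map_add' := fun x y => P.add_left x y a
        map_smul' := fun r x => P.smul_left r x a }
  have hαzero : ∀ i, α i = 0 := by
    by_contra hcon
    push_neg at hcon
    obtain ⟨i₀, hi₀⟩ := hcon
    set a : L := ∑ i, α i • b i with ha
    have hrepra : ∀ t, b.repr a t = α t := by
      intro t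
      rw [ha]
      simp only [map_sum, map_smul, Module.Basis.repr_self, Finsupp.smul_single,
        Finsupp.finset_sum_apply, Finsupp.smul_apply, Finsupp.single_apply, smul_eq_mul,
        mul_ite, mul_one, mul_zero]
      rw [Finset.sum_ite_eq' Finset.univ t α]
      simp
    have ha0 : a ≠ 0 := by
      intro h
      apply hi₀
      rw [← hrepra i₀, h, map_zero]
      rfl
    apply hL
    refine ⟨a, ha0, ?_⟩
    have hbasis : ∀ j : Fin n, ∃ δ : k, ⁅a, b j⁆ = δ • a := by
      intro j
      set vj : MvPolynomial (Fin n ⊕ Unit) k :=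
        ∑ t : Fin n, (b.repr ⁅a, b j⁆ t) • X (Sum.inl t) with hvj
      -- Step 1: compute the bracket of u with X j
      have hb1 : P.br u (X (Sum.inl j)) = vj * z := by
        have e1 : P.br u (X (Sum.inl j)) = brL (X (Sum.inl j)) u := rfl
        rw [e1, hdec, map_add, map_smul, map_sum]
        have e2 : brL (X (Sum.inl j)) z = 0 := hz (X (Sum.inl j))
        rw [e2, smul_zero, add_zero]
        simp only [map_smul]
        have e3 : ∀ i : Fin n, brL (X (Sum.inl j)) (X (Sum.inl i))
            = (∑ t : Fin n, (b.repr ⁅b i, b j⁆ t) • X (Sum.inl t)) * z := fun i => hbr i j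
        calc (∑ i, α i • brL (X (Sum.inl j)) (X (Sum.inl i)))
            = ∑ i, (α i • (∑ t : Fin n, (b.repr ⁅b i, b j⁆ t) • X (Sum.inl t))) * z := by
              refine Finset.sum_congr rfl fun i _ => ?_
              rw [e3 i, smul_mul_assoc]
          _ = (∑ i, α i • (∑ t : Fin n, (b.repr ⁅b i, b j⁆ t) • X (Sum.inl t))) * z := by
              rw [Finset.sum_mul]
          _ = vj * z := by
              congr 1
              rw [hvj]
              simp only [Finset.smul_sum, smul_smul]
              rw [Finset.sum_comm]
              refine Finset.sum_congr rfl fun t _ => ?_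
              rw [← Finset.sum_smul]
              congr 1
              have hab : (⁅a, b j⁆ : L) = ∑ i, α i • ⁅b i, b j⁆ := by
                rw [ha, aux_sum_lie]
                simp [smul_lie]
              rw [hab]
              simp [map_sum, map_smul]
      obtain ⟨c, hc⟩ := hnorm (X (Sum.inl j))
      have hvz : u * c = vj * z := by rw [← hc, hb1]
      -- Step 2: replace c by its degree-one homogeneous component
      set c1 := homogeneousComponent 1 c with hc1def
      have hvj1 : vj.IsHomogeneous 1 := by
        rw [← mem_homogeneousSubmodule]
        refine Submodule.sum_mem _ fun t _ => Submodule.smul_mem _ _ ?_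
        rw [mem_homogeneousSubmodule]
        exact isHomogeneous_X _ _
      have hvz2 : (vj * z).IsHomogeneous 2 := hvj1.mul (isHomogeneous_X _ _)
      have hkey : u * c1 = vj * z := by
        have h3 : homogeneousComponent 2 (u * c) = vj * z := by
          rw [hvz]
          have := homogeneousComponent_of_mem
            ((mem_homogeneousSubmodule _ _).mpr hvz2) (m := 2)
          rw [this, if_pos rfl]
        have expand : u * c
            = ∑ m ∈ Finset.range (c.totalDegree + 1), u * homogeneousComponent m c := by
          conv_lhs => rw [← sum_homogeneousComponent c]
          rw [Finset.mul_sum]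
        have h2 : homogeneousComponent 2 (u * c)
            = ∑ m ∈ Finset.range (c.totalDegree + 1),
                if (1 : ℕ) = m then u * homogeneousComponent m c else 0 := by
          rw [expand, map_sum]
          refine Finset.sum_congr rfl fun m _ => ?_
          have := homogeneousComponent_of_mem
            ((mem_homogeneousSubmodule _ _).mpr
              (hu.mul (homogeneousComponent_isHomogeneous m c))) (m := 2)
          rw [this]
          exact if_congr (by omega) rfl rfl
        rw [h2, Finset.sum_ite_eq (Finset.range (c.totalDegree + 1)) 1
          (fun m => u * homogeneousComponent m c)] at h3
        by_cases hmem : 1 ∈ Finset.range (c.totalDegree + 1)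
        · rw [if_pos hmem] at h3
          exact h3
        · rw [if_neg hmem] at h3
          have htd : c.totalDegree = 0 := by
            simp only [Finset.mem_range] at hmem
            omega
          have hc10 : c1 = 0 := homogeneousComponent_eq_zero (n := 1) (φ := c) (by omega)
          rw [hc10, mul_zero]
          exact h3
      have hc1h : c1.IsHomogeneous 1 := homogeneousComponent_isHomogeneous 1 c
      set w : Fin n → k := fun i => coeff (Finsupp.single (Sum.inl i) 1) c1 with hw
      set δ : k := coeff (Finsupp.single (Sum.inr ()) 1) c1 with hδ
      have hc1dec : c1 = (∑ i : Fin n, w i • X (Sum.inl i)) + δ • z := by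
        conv_lhs => rw [aux_deg1_decomp hc1h]
        rw [Fintype.sum_sum_type]
        simp [hw, hδ, hzdef]
      -- Step 3: evaluate at z = 0
      let φ : MvPolynomial (Fin n ⊕ Unit) k →ₐ[k] MvPolynomial (Fin n ⊕ Unit) k :=
        aeval (Sum.elim (fun i => X (Sum.inl i)) (fun _ => 0))
      have hφz : φ z = 0 := by simp [φ, hzdef]
      have hφX : ∀ i : Fin n, φ (X (Sum.inl i)) = X (Sum.inl i) := by
        intro i; simp [φ]
      have hφu : φ u = ∑ i, α i • X (Sum.inl i) := by
        rw [hdec, map_add, map_smul, hφz, smul_zero, add_zero, map_sum]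
        refine Finset.sum_congr rfl fun i _ => ?_
        rw [map_smul, hφX]
      have hφc1 : φ c1 = ∑ i, w i • X (Sum.inl i) := by
        rw [hc1dec, map_add, map_smul, hφz, smul_zero, add_zero, map_sum]
        refine Finset.sum_congr rfl fun i _ => ?_
        rw [map_smul, hφX]
      have hφ0 : (∑ i, α i • X (Sum.inl i) : MvPolynomial (Fin n ⊕ Unit) k)
          * (∑ i, w i • X (Sum.inl i)) = 0 := by
        rw [← hφu, ← hφc1, ← map_mul, hkey, map_mul, hφz, mul_zero]
      have hTα : (∑ i, α i • X (Sum.inl i) : MvPolynomial (Fin n ⊕ Unit) k) ≠ 0 := by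
        intro h
        apply hi₀
        have := aux_coeff_sum α (Sum.inl i₀)
        rw [h] at this
        simpa using this.symm
      have hTw : (∑ i, w i • X (Sum.inl i) : MvPolynomial (Fin n ⊕ Unit) k) = 0 :=
        (mul_eq_zero.mp hφ0).resolve_left hTα
      have hw0 : ∀ i, w i = 0 := by
        intro i
        have := aux_coeff_sum w (Sum.inl i)
        rw [hTw] at this
        simpa using this.symm
      have hc1z : c1 = δ • z := by
        rw [hc1dec]
        simp [hw0]
      -- Step 4: cancel z
      have hz0 : z ≠ 0 := X_ne_zero _
      have hcancel : δ • u = vj := by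
        apply mul_right_cancel₀ hz0
        rw [smul_mul_assoc, ← mul_smul_comm, ← hc1z, hkey]
      refine ⟨δ, b.repr.injective ?_⟩
      ext t
      have hct : δ * α t = b.repr ⁅a, b j⁆ t := by
        have h1 := congrArg (coeff (Finsupp.single (Sum.inl t) 1)) hcancel
        rw [coeff_smul, hvj, aux_coeff_sum] at h1
        simpa [hα] using h1
      rw [map_smul]
      simp only [Finsupp.smul_apply, smul_eq_mul]
      rw [hrepra t, ← hct]
    intro x
    choose δ hδ using hbasis
    refine ⟨∑ j, b.repr x j * (-(δ j)), ?_⟩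
    conv_lhs => rw [← b.sum_repr x]
    rw [aux_sum_lie, Finset.sum_smul]
    refine Finset.sum_congr rfl fun j _ => ?_
    have hba : ⁅b j, a⁆ = -(δ j • a) := by rw [← lie_skew, hδ j]
    rw [smul_lie, hba, mul_smul, neg_smul, smul_neg]
  -- conclusion: u = β • z with β ≠ 0
  have huz : u = β • z := by
    rw [hdec]
    simp [hαzero]
  refine ⟨β, ?_, huz⟩
  intro hβ0
  apply hu0
  rw [huz, hβ0, zero_smul]
end

section
/- Let g and g' be finite-dimensional Lie algebras over k with no 1-dimensional Lie ideals. If PH(g) and PH(g') are isomorphic as graded Poisson algebras via an isomorphism fixing the homogenizing variable z, then g and g' are isomorphic as Lie algebras. -/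
open MvPolynomial

section Aux

lemma aux_deg_one' {σ : Type*} (d : σ →₀ ℕ) (h : Finsupp.degree d = 1) :
    ∃ v, d = Finsupp.single v 1 := by
  classical
  have hc : Multiset.card (Finsupp.toMultiset d) = 1 := by
    rw [Finsupp.card_toMultiset]
    simpa [Finsupp.degree_apply, Finsupp.sum] using h
  obtain ⟨a, ha⟩ := Multiset.card_eq_one.mp hc
  refine ⟨a, ?_⟩
  have := congrArg Multiset.toFinsupp ha
  rwa [Finsupp.toMultiset_toFinsupp, Multiset.toFinsupp_singleton] at this

lemma aux_hom_one {R : Type*} [CommRing R] {σ : Type*} [Fintype σ]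
    {p : MvPolynomial σ R} (hp : p.IsHomogeneous 1) :
    p = ∑ v : σ, MvPolynomial.coeff (Finsupp.single v 1) p • MvPolynomial.X v := by
  classical
  apply MvPolynomial.ext
  intro m
  rw [MvPolynomial.coeff_sum]
  simp only [MvPolynomial.coeff_smul, MvPolynomial.coeff_X', smul_eq_mul]
  by_cases hm : Finsupp.degree m = 1
  · obtain ⟨v, rfl⟩ := aux_deg_one' m hm
    rw [Finset.sum_eq_single v]
    · simp
    · intro w _ hw
      rw [if_neg, mul_zero]
      intro hcontra
      exact hw ((Finsupp.single_left_inj one_ne_zero).mp hcontra)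
    · simp
  · have h0 : MvPolynomial.coeff m p = 0 := by
      by_contra hcon
      exact hm (by simpa [Finsupp.degree_eq_weight_one, Pi.one_def] using hp hcon)
    rw [h0, Finset.sum_eq_zero]
    intro v _
    rw [if_neg, mul_zero]
    intro hcon
    apply hm
    rw [← hcon]
    simp [Finsupp.degree_apply, Finsupp.support_single_ne_zero _ one_ne_zero]

lemma aux_comp_comm {R : Type*} [CommRing R] {σ σ' : Type*}
    (φ : MvPolynomial σ R ≃ₐ[R] MvPolynomial σ' R)
    (hg : ∀ (u : MvPolynomial σ R) (d : ℕ), u.IsHomogeneous d → (φ u).IsHomogeneous d)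
    (p : MvPolynomial σ R) (d : ℕ) :
    homogeneousComponent d (φ p) = φ (homogeneousComponent d p) := by
  have h1 : φ p = ∑ i ∈ Finset.range (p.totalDegree + 1), φ (homogeneousComponent i p) := by
    rw [← map_sum, sum_homogeneousComponent]
  rw [h1, map_sum]
  rw [Finset.sum_congr rfl (fun i _ => homogeneousComponent_of_mem
    ((mem_homogeneousSubmodule _ _).2 (hg _ i (homogeneousComponent_isHomogeneous i p))))]
  rw [Finset.sum_ite_eq]
  by_cases hd : d ∈ Finset.range (p.totalDegree + 1)
  · rw [if_pos hd]
  · rw [if_neg hd, homogeneousComponent_eq_zero, map_zero]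
    simpa using Nat.lt_of_succ_le (not_lt.mp (by simpa using hd))

lemma aux_symm_graded {R : Type*} [CommRing R] {σ σ' : Type*}
    (φ : MvPolynomial σ R ≃ₐ[R] MvPolynomial σ' R)
    (hg : ∀ (u : MvPolynomial σ R) (d : ℕ), u.IsHomogeneous d → (φ u).IsHomogeneous d)
    {u' : MvPolynomial σ' R} {d : ℕ} (hu' : u'.IsHomogeneous d) :
    (φ.symm u').IsHomogeneous d := by
  have h := aux_comp_comm φ hg (φ.symm u') d
  rw [AlgEquiv.apply_symm_apply] at h
  have h2 : homogeneousComponent d u' = u' := by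
    rw [homogeneousComponent_of_mem ((mem_homogeneousSubmodule _ _).2 hu'), if_pos rfl]
  have h3 : homogeneousComponent d (φ.symm u') = φ.symm u' := by
    apply φ.injective
    rw [← h, h2, AlgEquiv.apply_symm_apply]
  rw [← h3]
  exact homogeneousComponent_isHomogeneous d _

variable {R : Type*} [CommRing R] {ι : Type*} [DecidableEq ι]

lemma aux_XX_eq (a c : ι ⊕ Unit) :
    (X a * X c : MvPolynomial (ι ⊕ Unit) R)
      = monomial (Finsupp.single a 1 + Finsupp.single c 1) 1 := by
  rw [X, X, monomial_mul, one_mul]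

lemma aux_coeff_XZ (s u : ι) :
    coeff (Finsupp.single (Sum.inl u) 1 + Finsupp.single (Sum.inr ()) 1)
      ((X (Sum.inl s) * X (Sum.inr ()) : MvPolynomial (ι ⊕ Unit) R))
      = if s = u then 1 else 0 := by
  rw [aux_XX_eq, coeff_monomial]
  congr 1
  simp only [eq_iff_iff]
  constructor
  · intro h
    have h2 := add_right_cancel h
    exact Sum.inl.inj ((Finsupp.single_left_inj one_ne_zero).mp h2)
  · rintro rfl; rfl

lemma aux_coeff_ZZ (u : ι) :
    coeff (Finsupp.single (Sum.inl u) 1 + Finsupp.single (Sum.inr ()) 1)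
      ((X (Sum.inr ()) * X (Sum.inr ()) : MvPolynomial (ι ⊕ Unit) R)) = 0 := by
  rw [aux_XX_eq, coeff_monomial, if_neg]
  intro h
  have := DFunLike.congr_fun h (Sum.inl u)
  simp [Finsupp.single_apply] at this

lemma aux_coeff_X_X (s u : ι) :
    coeff (Finsupp.single (Sum.inl u) 1) ((X (Sum.inl s) : MvPolynomial (ι ⊕ Unit) R))
      = if s = u then 1 else 0 := by
  rw [coeff_X']
  congr 1
  simp only [eq_iff_iff]
  constructor
  · intro h
    exact Sum.inl.inj ((Finsupp.single_left_inj one_ne_zero).mp h)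
  · rintro rfl; rfl

lemma aux_coeff_X_Z (u : ι) :
    coeff (Finsupp.single (Sum.inl u) 1) ((X (Sum.inr ()) : MvPolynomial (ι ⊕ Unit) R)) = 0 := by
  rw [coeff_X', if_neg]
  intro h
  have := DFunLike.congr_fun h (Sum.inl u)
  simp [Finsupp.single_apply] at this

lemma aux_bilin_expand {k M N Q : Type*} [CommRing k]
    [AddCommGroup M] [Module k M] [AddCommGroup N] [Module k N]
    [AddCommGroup Q] [Module k Q]
    (F : M →ₗ[k] N →ₗ[k] Q) {ι₁ ι₂ : Type*} (s : Finset ι₁) (t : Finset ι₂)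
    (f : ι₁ → k) (g : ι₂ → k) (x : ι₁ → M) (y : ι₂ → N) :
    F (∑ i ∈ s, f i • x i) (∑ j ∈ t, g j • y j)
      = ∑ i ∈ s, ∑ j ∈ t, (f i * g j) • F (x i) (y j) := by
  rw [map_sum]
  simp only [LinearMap.coe_sum, LinearMap.sum_apply, map_smul, LinearMap.smul_apply, map_sum]
  rw [Finset.sum_comm]
  refine Finset.sum_congr rfl fun j _ => ?_
  rw [Finset.smul_sum]
  refine Finset.sum_congr rfl fun i _ => ?_
  rw [smul_smul, mul_comm]

end Aux

open MvPolynomial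

namespace PoissonBracket
variable {k A : Type*} [CommRing k] [CommRing A] [Algebra k A] (P : PoissonBracket k A)

lemma add_right_s16 (a b c : A) : P.br a (b + c) = P.br a b + P.br a c := by
  rw [P.antisymm a (b + c), P.add_left, P.antisymm b a, P.antisymm c a]
  abel

lemma smul_right_s16 (r : k) (a b : A) : P.br a (r • b) = r • P.br a b := by
  rw [P.antisymm a (r • b), P.smul_left, P.antisymm b a]
  simp

/-- The bracket as a bilinear map. -/
def brL : A →ₗ[k] A →ₗ[k] A :=
  LinearMap.mk₂ k P.br P.add_left P.smul_left
    (fun a b c => P.add_right_s16 a b c) (fun r a b => P.smul_right_s16 r a b)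

@[simp] lemma brL_apply (a b : A) : P.brL a b = P.br a b := rfl

lemma br_sum_left {ι₁ : Type*} (s : Finset ι₁) (f : ι₁ → k) (x : ι₁ → A) (w : A) :
    P.br (∑ i ∈ s, f i • x i) w = ∑ i ∈ s, f i • P.br (x i) w := by
  rw [show P.br (∑ i ∈ s, f i • x i) w = P.brL (∑ i ∈ s, f i • x i) w from rfl, map_sum]
  simp only [LinearMap.coe_sum, LinearMap.sum_apply, map_smul, LinearMap.smul_apply, brL_apply]

lemma br_sum_right {ι₂ : Type*} (t : Finset ι₂) (g : ι₂ → k) (y : ι₂ → A) (w : A) :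
    P.br w (∑ j ∈ t, g j • y j) = ∑ j ∈ t, g j • P.br w (y j) := by
  rw [show P.br w (∑ j ∈ t, g j • y j) = P.brL w (∑ j ∈ t, g j • y j) from rfl, map_sum]
  simp only [map_smul, brL_apply]

lemma br_expand {z : A} (hz : ∀ a, P.br z a = 0)
    {ι₁ ι₂ : Type*} (s : Finset ι₁) (t : Finset ι₂)
    (f : ι₁ → k) (g : ι₂ → k) (x : ι₁ → A) (y : ι₂ → A) (e e' : k) :
    P.br ((∑ i ∈ s, f i • x i) + e • z) ((∑ j ∈ t, g j • y j) + e' • z)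
      = ∑ i ∈ s, ∑ j ∈ t, (f i * g j) • P.br (x i) (y j) := by
  have hz2 : ∀ a : A, P.br a z = 0 := fun a => by rw [P.antisymm, hz, neg_zero]
  rw [P.add_left, P.smul_left, hz, smul_zero, add_zero, P.add_right_s16, P.smul_right_s16, hz2,
    smul_zero, add_zero, P.br_sum_left]
  refine Finset.sum_congr rfl fun i _ => ?_
  rw [P.br_sum_right, Finset.smul_sum]
  refine Finset.sum_congr rfl fun j _ => ?_
  rw [smul_smul]

end PoissonBracket


/-- If `L` and `L'` are finite-dimensional Lie algebras with no
1-dimensional Lie ideals and `PH(L) ≅ PH(L')` as graded Poisson algebras via an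
isomorphism fixing the homogenizing variable `z`, then `L ≅ L'` as Lie algebras. -/
theorem homogenized_kostant_kirillov_iso_detects_lie_algebra
    {k : Type*} [Field k] [IsAlgClosed k] [CharZero k]
    {L L' : Type*} [LieRing L] [LieAlgebra k L] [Module.Finite k L]
    [LieRing L'] [LieAlgebra k L'] [Module.Finite k L']
    (hL : ¬∃ b : L, b ≠ 0 ∧ ∀ x : L, ∃ c : k, ⁅x, b⁆ = c • b)
    (hL' : ¬∃ b : L', b ≠ 0 ∧ ∀ x : L', ∃ c : k, ⁅x, b⁆ = c • b)
    (n n' : ℕ) (b : Module.Basis (Fin n) k L) (b' : Module.Basis (Fin n') k L')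
    (P : PoissonBracket k (MvPolynomial (Fin n ⊕ Unit) k))
    (P' : PoissonBracket k (MvPolynomial (Fin n' ⊕ Unit) k))
    (hbr : ∀ i j : Fin n,
      P.br (X (Sum.inl i)) (X (Sum.inl j))
        = (∑ t : Fin n, (b.repr ⁅b i, b j⁆ t) • (X (Sum.inl t) :
            MvPolynomial (Fin n ⊕ Unit) k)) * X (Sum.inr ()))
    (hz : ∀ a, P.br (X (Sum.inr ())) a = 0)
    (hbr' : ∀ i j : Fin n',
      P'.br (X (Sum.inl i)) (X (Sum.inl j))
        = (∑ t : Fin n', (b'.repr ⁅b' i, b' j⁆ t) • (X (Sum.inl t) :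
            MvPolynomial (Fin n' ⊕ Unit) k)) * X (Sum.inr ()))
    (hz' : ∀ a, P'.br (X (Sum.inr ())) a = 0)
    (φ : MvPolynomial (Fin n ⊕ Unit) k ≃ₐ[k] MvPolynomial (Fin n' ⊕ Unit) k)
    (hφP : ∀ a b, φ (P.br a b) = P'.br (φ a) (φ b))
    (hφgraded : ∀ (u : MvPolynomial (Fin n ⊕ Unit) k) (d : ℕ),
      u.IsHomogeneous d → (φ u).IsHomogeneous d)
    (hφz : φ (X (Sum.inr ())) = X (Sum.inr ())) :
    Nonempty (L ≃ₗ⁅k⁆ L') := by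
  classical
  -- coefficient matrices of φ and φ.symm on degree-one elements
  set A : Fin n → Fin n' → k :=
    fun i s => coeff (Finsupp.single (Sum.inl s) 1) (φ (X (Sum.inl i))) with hA
  set c : Fin n → k :=
    fun i => coeff (Finsupp.single (Sum.inr ()) 1) (φ (X (Sum.inl i))) with hc
  set B : Fin n' → Fin n → k :=
    fun j t => coeff (Finsupp.single (Sum.inl t) 1) (φ.symm (X (Sum.inl j))) with hB
  set dd : Fin n' → k :=
    fun j => coeff (Finsupp.single (Sum.inr ()) 1) (φ.symm (X (Sum.inl j))) with hdd
  have hform : ∀ i, φ (X (Sum.inl i))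
      = (∑ s : Fin n', A i s • X (Sum.inl s)) + c i • X (Sum.inr ()) := by
    intro i
    have h1 : (φ (X (Sum.inl i))).IsHomogeneous 1 := hφgraded _ 1 (isHomogeneous_X _ _)
    have h2 := aux_hom_one h1
    rw [h2, Fintype.sum_sum_type]
    simp [hA, hc]
  have hψz : φ.symm (X (Sum.inr ())) = X (Sum.inr ()) := by
    rw [← hφz, AlgEquiv.symm_apply_apply]
  have hform' : ∀ j, φ.symm (X (Sum.inl j))
      = (∑ t : Fin n, B j t • X (Sum.inl t)) + dd j • X (Sum.inr ()) := by
    intro j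
    have h1 : (φ.symm (X (Sum.inl j))).IsHomogeneous 1 :=
      aux_symm_graded φ hφgraded (isHomogeneous_X _ _)
    have h2 := aux_hom_one h1
    rw [h2, Fintype.sum_sum_type]
    simp [hB, hdd]
  -- matrix identities
  have hBA : ∀ j u, (∑ t : Fin n, B j t * A t u) = if j = u then 1 else 0 := by
    intro j u
    have e1 : φ (φ.symm (X (Sum.inl j))) = X (Sum.inl j) := φ.apply_symm_apply _
    rw [hform' j] at e1
    simp only [map_add, map_sum, map_smul, hφz, hform] at e1
    have e2 := congrArg (coeff (Finsupp.single (Sum.inl u) 1)) e1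
    simp only [coeff_add, coeff_sum, coeff_smul, aux_coeff_X_X, aux_coeff_X_Z, smul_eq_mul,
      mul_zero, add_zero, mul_ite, mul_one, Finset.sum_ite_eq', Finset.mem_univ, if_true,
      Finset.sum_const_zero] at e2
    exact e2
  have hAB : ∀ i u, (∑ s : Fin n', A i s * B s u) = if i = u then 1 else 0 := by
    intro i u
    have e1 : φ.symm (φ (X (Sum.inl i))) = X (Sum.inl i) := φ.symm_apply_apply _
    rw [hform i] at e1
    simp only [map_add, map_sum, map_smul, hψz, hform'] at e1
    have e2 := congrArg (coeff (Finsupp.single (Sum.inl u) 1)) e1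
    simp only [coeff_add, coeff_sum, coeff_smul, aux_coeff_X_X, aux_coeff_X_Z, smul_eq_mul,
      mul_zero, add_zero, mul_ite, mul_one, Finset.sum_ite_eq', Finset.mem_univ, if_true,
      Finset.sum_const_zero] at e2
    exact e2
  -- key structure-constant identity
  have hkey : ∀ i j u, (∑ t : Fin n, (b.repr ⁅b i, b j⁆) t * A t u)
      = ∑ s : Fin n', ∑ r : Fin n', (A i s * A j r) * (b'.repr ⁅b' s, b' r⁆) u := by
    intro i j u
    have e1 := hφP (X (Sum.inl i)) (X (Sum.inl j))
    rw [hbr i j, map_mul, hφz, map_sum, hform i, hform j,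
      P'.br_expand hz' Finset.univ Finset.univ _ _ _ _ (c i) (c j)] at e1
    simp only [map_smul, hform, hbr'] at e1
    have e2 := congrArg
      (coeff (Finsupp.single (Sum.inl u) 1 + Finsupp.single (Sum.inr ()) 1)) e1
    simp only [Finset.sum_mul, add_mul, smul_mul_assoc, coeff_add, coeff_sum, coeff_smul,
      aux_coeff_XZ, aux_coeff_ZZ, smul_eq_mul, mul_ite, mul_one, mul_zero,
      Finset.sum_ite_eq', Finset.mem_univ, if_true, add_zero, Finset.sum_const_zero] at e2
    exact e2
  -- the linear maps
  set τ : L →ₗ[k] L' := b.constr k (fun i => ∑ s : Fin n', A i s • b' s) with hτ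
  set τ' : L' →ₗ[k] L := b'.constr k (fun j => ∑ t : Fin n, B j t • b t) with hτ'
  have hτb : ∀ i, τ (b i) = ∑ s : Fin n', A i s • b' s := fun i => b.constr_basis k _ i
  have hτ'b : ∀ j, τ' (b' j) = ∑ t : Fin n, B j t • b t := fun j => b'.constr_basis k _ j
  have hττ' : ∀ j, τ (τ' (b' j)) = b' j := by
    intro j
    rw [hτ'b, map_sum]
    simp only [map_smul, hτb]
    simp only [Finset.smul_sum, smul_smul]
    rw [Finset.sum_comm]
    rw [Finset.sum_congr rfl (fun s _ => by rw [← Finset.sum_smul, hBA j s])]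
    simp [Finset.sum_ite_eq]
  have hτ'τ : ∀ i, τ' (τ (b i)) = b i := by
    intro i
    rw [hτb, map_sum]
    simp only [map_smul, hτ'b]
    simp only [Finset.smul_sum, smul_smul]
    rw [Finset.sum_comm]
    rw [Finset.sum_congr rfl (fun s _ => by rw [← Finset.sum_smul, hAB i s])]
    simp [Finset.sum_ite_eq]
  -- the Lie brackets as bilinear maps
  set lieB : L' →ₗ[k] L' →ₗ[k] L' :=
    LinearMap.mk₂ k (fun x y => ⁅x, y⁆) add_lie smul_lie lie_add lie_smul with hlieB
  have hlieB_apply : ∀ x y : L', lieB x y = ⁅x, y⁆ := fun _ _ => rfl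
  set lieBL : L →ₗ[k] L →ₗ[k] L :=
    LinearMap.mk₂ k (fun x y => ⁅x, y⁆) add_lie smul_lie lie_add lie_smul with hlieBL
  have hlieBL_apply : ∀ x y : L, lieBL x y = ⁅x, y⁆ := fun _ _ => rfl
  -- Lie compatibility on basis vectors
  have hbas : ∀ i j, τ ⁅b i, b j⁆ = ⁅τ (b i), τ (b j)⁆ := by
    intro i j
    have hLft : τ ⁅b i, b j⁆ = ∑ u : Fin n',
        (∑ t : Fin n, (b.repr ⁅b i, b j⁆) t * A t u) • b' u := by
      conv_lhs => rw [← b.sum_repr ⁅b i, b j⁆]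
      rw [map_sum]
      simp only [map_smul, hτb]
      simp only [Finset.smul_sum, smul_smul]
      rw [Finset.sum_comm]
      exact Finset.sum_congr rfl fun u _ => by rw [← Finset.sum_smul]
    have hRgt : ⁅τ (b i), τ (b j)⁆ = ∑ s : Fin n', ∑ r : Fin n',
        (A i s * A j r) • ⁅b' s, b' r⁆ := by
      rw [hτb i, hτb j, ← hlieB_apply, aux_bilin_expand]
      simp only [hlieB_apply]
    rw [hLft, hRgt]
    apply b'.repr.injective
    ext u
    simp only [map_sum, map_smul, Finsupp.coe_finset_sum, Finset.sum_apply, Finsupp.smul_apply,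
      Module.Basis.repr_self, Finsupp.single_apply, smul_eq_mul, mul_ite, mul_one, mul_zero,
      Finset.sum_ite_eq', Finset.mem_univ, if_true]
    exact hkey i j u
  -- extend Lie compatibility to all elements
  have hlie : ∀ x y : L, τ ⁅x, y⁆ = ⁅τ x, τ y⁆ := by
    intro x y
    have e1 : (⁅x, y⁆ : L) = ∑ i : Fin n, ∑ j : Fin n,
        ((b.repr x) i * (b.repr y) j) • ⁅b i, b j⁆ := by
      conv_lhs => rw [← b.sum_repr x, ← b.sum_repr y]
      rw [← hlieBL_apply, aux_bilin_expand]
      simp only [hlieBL_apply]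
    have e2 : (⁅τ x, τ y⁆ : L') = ∑ i : Fin n, ∑ j : Fin n,
        ((b.repr x) i * (b.repr y) j) • ⁅τ (b i), τ (b j)⁆ := by
      have hx : τ x = ∑ i : Fin n, (b.repr x) i • τ (b i) := by
        conv_lhs => rw [← b.sum_repr x]
        rw [map_sum]; simp only [map_smul]
      have hy : τ y = ∑ j : Fin n, (b.repr y) j • τ (b j) := by
        conv_lhs => rw [← b.sum_repr y]
        rw [map_sum]; simp only [map_smul]
      rw [hx, hy, ← hlieB_apply, aux_bilin_expand]
      simp only [hlieB_apply]
    rw [e1, e2, map_sum]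
    simp only [map_sum, map_smul]
    exact Finset.sum_congr rfl fun i _ => Finset.sum_congr rfl fun j _ => by rw [hbas i j]
  -- inverses
  have hleft : ∀ x : L, τ' (τ x) = x := by
    have h : τ'.comp τ = LinearMap.id := b.ext fun i => by
      simp only [LinearMap.comp_apply, LinearMap.id_apply, hτ'τ i]
    intro x
    simpa using LinearMap.congr_fun h x
  have hright : ∀ y : L', τ (τ' y) = y := by
    have h : τ.comp τ' = LinearMap.id := b'.ext fun j => by
      simp only [LinearMap.comp_apply, LinearMap.id_apply, hττ' j]
    intro y
    simpa using LinearMap.congr_fun h y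
  exact ⟨{ toLinearMap := τ,
           map_lie' := fun {x y} => hlie x y,
           invFun := τ',
           left_inv := hleft,
           right_inv := hright }⟩
end
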